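/- arXiv:2011.07399 — 12 statements merged into one kernel-verified Lean document; each statement's English description precedes it below -/
import Mathlib

section
/- Let Ω be a set and C a set of subsets of Ω. Then the following are equivalent: (i) there exists a linear order on Ω under which every member of C is convex; (ii) for every finite subset C' ⊆ C there exists a linear order on Ω under which every member of C' is convex. -/
/-- A subset `A` is convex with respect to an order relation `le` if whenever
`p ≤ q ≤ r` with `p ∈ A` and `r ∈ A`, also `q ∈ A`. -/
def IsConvex {Ω : Type*} (le : Ω → Ω → Prop) (A : Set Ω) : Prop :=
  ∀ p q r : Ω, le p q → le q r → p ∈ A → r ∈ A → q ∈ A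

/-- Two subsets overlap if they have nonempty intersection and neither contains the other. -/
def Overlap {Ω : Type*} (A B : Set Ω) : Prop :=
  (A ∩ B).Nonempty ∧ ¬ A ⊆ B ∧ ¬ B ⊆ A

/-- A patchwork on `Ω` is a set of subsets of `Ω` containing `∅` and `Ω` and closed under
intersection, union and difference of overlapping pairs. -/
def IsPatchwork {Ω : Type*} (P : Set (Set Ω)) : Prop :=
  ∅ ∈ P ∧ Set.univ ∈ P ∧
    ∀ A ∈ P, ∀ B ∈ P, Overlap A B → A ∩ B ∈ P ∧ A ∪ B ∈ P ∧ A \ B ∈ P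

/-- A member of a patchwork is autonomous if it is nonempty and overlaps no member. -/
def Autonomous {Ω : Type*} (P : Set (Set Ω)) (A : Set Ω) : Prop :=
  A ∈ P ∧ A.Nonempty ∧ ∀ B ∈ P, ¬ Overlap A B

/-- The cohort under `B`: the maximal autonomous proper subsets of `B`. -/
def Cohort {Ω : Type*} (P : Set (Set Ω)) (B : Set Ω) : Set (Set Ω) :=
  {A | Autonomous P A ∧ A ⊂ B ∧ ∀ C, Autonomous P C → C ⊂ B → A ⊆ C → A = C}

/-- Two members of a patchwork are adjacent if they are disjoint and their union is a member. -/
def Adjacent {Ω : Type*} (P : Set (Set Ω)) (A B : Set Ω) : Prop :=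
  Disjoint A B ∧ A ∪ B ∈ P

/-- The smallest patchwork on `Ω` containing `C`. -/
def patchworkClosure {Ω : Type*} (C : Set (Set Ω)) : Set (Set Ω) :=
  ⋂₀ {P | IsPatchwork P ∧ C ⊆ P}

/-!
Choose for every finite subfamily `s` of `C` a linear order `L s` making the members of `s` convex,
and take the limit of `L` along an ultrafilter `U` on the finite subfamilies refining `atTop`:
`a ≤ b` iff `a ≤ b` in `L s` for `U`-almost every `s`. Since `U` is an ultrafilter this is a linear
order. Each `A ∈ C` is convex in `L s` for `U`-almost every `s` (all `s ∋ A`), so for `p ≤ q ≤ r`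
in the limit with `p, r ∈ A` some single `s` witnesses all three facts at once, giving `q ∈ A`.
-/

open Filter

noncomputable abbrev Ultrafilter.linearOrderLim {ι Ω : Type*} (U : Ultrafilter ι)
    (L : ι → LinearOrder Ω) : LinearOrder Ω where
  le a b := ∀ᶠ i in U, (L i).le a b
  le_refl a := .of_forall fun i => (L i).le_refl a
  le_trans _ _ _ hab hbc := (hab.and hbc).mono fun i h => (L i).le_trans _ _ _ h.1 h.2
  le_antisymm _ _ hab hba := (hab.and hba).exists.elim fun i h => (L i).le_antisymm _ _ h.1 h.2
  le_total a b := Ultrafilter.eventually_or.mp (.of_forall fun i => (L i).le_total a b)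
  toDecidableLE := Classical.decRel _

theorem Ultrafilter.isConvex_linearOrderLim {ι Ω : Type*} {U : Ultrafilter ι}
    {L : ι → LinearOrder Ω} {A : Set Ω} (h : ∀ᶠ i in U, IsConvex (L i).le A) :
    IsConvex (U.linearOrderLim L).le A := fun p q r hpq hqr hp hr =>
  (h.and ((show ∀ᶠ i in U, (L i).le p q from hpq).and hqr)).exists.elim
    fun _ ⟨hi, hpq, hqr⟩ => hi p q r hpq hqr hp hr

theorem statement0 {Ω : Type*} (C : Set (Set Ω)) :
    (∃ L : LinearOrder Ω, ∀ A ∈ C, IsConvex L.le A) ↔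
      ∀ C' ⊆ C, C'.Finite → ∃ L : LinearOrder Ω, ∀ A ∈ C', IsConvex L.le A := by
  refine ⟨fun ⟨L, hL⟩ C' hC' _ => ⟨L, fun A hA => hL A (hC' hA)⟩, fun h => ?_⟩
  have hfinite (s : Finset C) : ∃ L : LinearOrder Ω, ∀ A ∈ s, IsConvex L.le (A : Set Ω) :=
    (h _ (Subtype.coe_image_subset C s) (s.finite_toSet.image _)).imp
      fun L hL A hA => hL A ⟨A, hA, rfl⟩
  choose L hL using hfinite
  let U : Ultrafilter (Finset C) := .of atTop
  refine ⟨U.linearOrderLim L, fun A hA => Ultrafilter.isConvex_linearOrderLim ?_⟩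
  exact Ultrafilter.of_le atTop <| (eventually_ge_atTop {⟨A, hA⟩}).mono
    fun s hs => hL s ⟨A, hA⟩ (hs (Finset.mem_singleton_self _))
end

section
/- Let Ω be a set and C a finite set of subsets of Ω. Then the smallest patchwork on Ω containing C (i.e., the intersection of all patchworks on Ω containing C) is finite. -/
theorem statement2 {Ω : Type*} (C : Set (Set Ω)) (hC : C.Finite) :
    (patchworkClosure C).Finite := by
  classical
  haveI : Finite ↥C := hC.to_subtype
  set t : Ω → (C → Prop) := fun x A => x ∈ (A : Set Ω) with ht
  set P : Set (Set Ω) := {S | ∃ T : Set (C → Prop), S = t ⁻¹' T} with hP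
  have hPat : IsPatchwork P := by
    refine ⟨⟨∅, by simp⟩, ⟨Set.univ, by simp⟩, ?_⟩
    rintro A ⟨TA, rfl⟩ B ⟨TB, rfl⟩ _
    exact ⟨⟨TA ∩ TB, rfl⟩, ⟨TA ∪ TB, rfl⟩, ⟨TA \ TB, rfl⟩⟩
  have hsub : C ⊆ P := by
    intro A hA
    refine ⟨{f | f ⟨A, hA⟩}, ?_⟩
    ext x; simp [t]
  have h1 : patchworkClosure C ⊆ P := Set.sInter_subset_of_mem ⟨hPat, hsub⟩
  have hinj : Set.InjOn (fun S => t '' S) P := by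
    rintro S ⟨TS, rfl⟩ S' ⟨TS', rfl⟩ h
    replace h : t '' (t ⁻¹' TS) = t '' (t ⁻¹' TS') := h
    ext x
    constructor
    · intro hx
      have h2 : t x ∈ t '' (t ⁻¹' TS) := ⟨x, hx, rfl⟩
      rw [h] at h2
      obtain ⟨y, hy, hxy⟩ := h2
      show t x ∈ TS'
      rw [← hxy]; exact hy
    · intro hx
      have h2 : t x ∈ t '' (t ⁻¹' TS') := ⟨x, hx, rfl⟩
      rw [← h] at h2
      obtain ⟨y, hy, hxy⟩ := h2
      show t x ∈ TS
      rw [← hxy]; exact hy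
  have hPfin : P.Finite := by
    have : ((fun S => t '' S) '' P).Finite := Set.toFinite _
    exact Set.Finite.of_finite_image this hinj
  exact hPfin.subset h1
end

section
/- Let P be a finite patchwork on a set Ω and let A ∈ P be nonempty. Then A is the union of the maximal autonomous members of P contained in A, and these maximal autonomous members are pairwise disjoint. -/
/-- The maximal autonomous members of `P` contained in `A`. -/
def MaxAutSub {Ω : Type*} (P : Set (Set Ω)) (A : Set Ω) : Set (Set Ω) :=
  {C | Autonomous P C ∧ C ⊆ A ∧ ∀ D : Set Ω, Autonomous P D → D ⊆ A → C ⊆ D → C = D}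

/-!
A member `M` of `P` that is minimal among the members containing a point `x` is autonomous: a
member `B` overlapping `M` would make `M ∩ B` or `M \ B`, whichever contains `x`, a strictly
smaller member containing `x`. Since `P` is finite, every `x ∈ A` lies in such an `M ⊆ A`, and
again by finiteness `M` extends to a maximal autonomous member below `A`, so these cover `A`.
Two autonomous sets that meet are nested, so two distinct maximal ones are disjoint.
-/

theorem not_overlap_iff {Ω : Type*} {A B : Set Ω} :
    ¬ Overlap A B ↔ Disjoint A B ∨ A ⊆ B ∨ B ⊆ A := by
  rw [Overlap, ← Set.not_disjoint_iff_nonempty_inter]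
  tauto

theorem Autonomous.subset_or_superset_of_not_disjoint {Ω : Type*} {P : Set (Set Ω)}
    {A B : Set Ω} (hA : Autonomous P A) (hB : B ∈ P) (hAB : ¬ Disjoint A B) :
    A ⊆ B ∨ B ⊆ A :=
  (not_overlap_iff.mp (hA.2.2 B hB)).resolve_left hAB

theorem mem_maxAutSub_iff {Ω : Type*} {P : Set (Set Ω)} {A C : Set Ω} :
    C ∈ MaxAutSub P A ↔ Maximal (fun D => Autonomous P D ∧ D ⊆ A) C := by
  refine ⟨fun ⟨hC, hCA, hmax⟩ => ⟨⟨hC, hCA⟩, fun D hD hCD => (hmax D hD.1 hD.2 hCD).ge⟩,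
    fun h => ⟨h.prop.1, h.prop.2, fun D hD hDA hCD => h.eq_of_le ⟨hD, hDA⟩ hCD⟩⟩

namespace IsPatchwork

variable {Ω : Type*} {P : Set (Set Ω)}

theorem autonomous_of_minimal (hP : IsPatchwork P) {x : Ω} {M : Set Ω}
    (hM : Minimal (fun B => B ∈ P ∧ x ∈ B) M) : Autonomous P M := by
  obtain ⟨⟨hMP, hxM⟩, hmin⟩ := hM
  refine ⟨hMP, ⟨x, hxM⟩, fun B hB hov => ?_⟩
  obtain ⟨hinter, -, hdiff⟩ := hP.2.2 M hMP B hB hov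
  by_cases hxB : x ∈ B
  · have hMB : M ⊆ M ∩ B := hmin ⟨hinter, hxM, hxB⟩ Set.inter_subset_left
    exact hov.2.1 (hMB.trans Set.inter_subset_right)
  · have hMB : M ⊆ M \ B := hmin ⟨hdiff, hxM, hxB⟩ Set.sdiff_subset
    obtain ⟨y, hyM, hyB⟩ := hov.1
    exact (hMB hyM).2 hyB

theorem exists_autonomous_mem_subset (hP : IsPatchwork P) (hfin : P.Finite) {A : Set Ω}
    (hA : A ∈ P) {x : Ω} (hx : x ∈ A) : ∃ M, Autonomous P M ∧ M ⊆ A ∧ x ∈ M := by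
  obtain ⟨M, hMA, hM⟩ := (hfin.sep fun B => x ∈ B).exists_le_minimal (a := A) ⟨hA, hx⟩
  exact ⟨M, hP.autonomous_of_minimal hM, hMA, hM.prop.2⟩

end IsPatchwork

theorem exists_mem_maxAutSub_superset {Ω : Type*} {P : Set (Set Ω)} (hfin : P.Finite)
    {A M : Set Ω} (hM : Autonomous P M) (hMA : M ⊆ A) : ∃ C ∈ MaxAutSub P A, M ⊆ C := by
  have hfin' : {D | Autonomous P D ∧ D ⊆ A}.Finite := hfin.subset fun D hD => hD.1.1
  obtain ⟨C, hMC, hC⟩ := hfin'.exists_le_maximal (a := M) ⟨hM, hMA⟩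
  exact ⟨C, mem_maxAutSub_iff.mpr hC, hMC⟩

theorem disjoint_of_mem_maxAutSub {Ω : Type*} {P : Set (Set Ω)} {A C D : Set Ω}
    (hC : C ∈ MaxAutSub P A) (hD : D ∈ MaxAutSub P A) (hCD : C ≠ D) : Disjoint C D := by
  by_contra hmeet
  rcases hC.1.subset_or_superset_of_not_disjoint hD.1.1 hmeet with h | h
  · exact hCD (hC.2.2 D hD.1 hD.2.1 h)
  · exact hCD (hD.2.2 C hC.1 hC.2.1 h).symm

theorem statement5_general {Ω : Type*} (P : Set (Set Ω)) (hP : IsPatchwork P) (hfin : P.Finite)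
    (A : Set Ω) (hA : A ∈ P) :
    A = ⋃₀ MaxAutSub P A ∧
      ∀ C ∈ MaxAutSub P A, ∀ D ∈ MaxAutSub P A, C ≠ D → Disjoint C D := by
  refine ⟨subset_antisymm (fun x hx => ?_) (Set.sUnion_subset fun C hC => hC.2.1),
    fun C hC D hD => disjoint_of_mem_maxAutSub hC hD⟩
  obtain ⟨M, hM, hMA, hxM⟩ := hP.exists_autonomous_mem_subset hfin hA hx
  obtain ⟨C, hC, hMC⟩ := exists_mem_maxAutSub_superset hfin hM hMA
  exact ⟨C, hC, hMC hxM⟩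

theorem statement5 {Ω : Type*} (P : Set (Set Ω)) (hP : IsPatchwork P) (hfin : P.Finite)
    (A : Set Ω) (hA : A ∈ P) (hne : A.Nonempty) :
    A = ⋃₀ MaxAutSub P A ∧
      ∀ C ∈ MaxAutSub P A, ∀ D ∈ MaxAutSub P A, C ≠ D → Disjoint C D :=
  statement5_general P hP hfin A hA
end

section
/- Let P be a finite patchwork on a set Ω, let A ∈ P be nonempty with A ≠ Ω, and let B be the least autonomous member of P properly containing A. Then every maximal autonomous member of P contained in A belongs to the cohort under B, i.e., is a maximal autonomous proper subset of B. -/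
theorem statement6 {Ω : Type*} (P : Set (Set Ω)) (hP : IsPatchwork P) (hfin : P.Finite)
    (A : Set Ω) (hA : A ∈ P) (hne : A.Nonempty) (hAne : A ≠ Set.univ)
    (B : Set Ω) (hB : Autonomous P B) (hAB : A ⊂ B)
    (hleast : ∀ C : Set Ω, Autonomous P C → A ⊂ C → B ⊆ C) :
    ∀ M ∈ MaxAutSub P A, M ∈ Cohort P B := by
  rintro M ⟨hMaut, hMA, hMmax⟩
  refine ⟨hMaut, lt_of_le_of_lt hMA hAB, ?_⟩
  intro C hCaut hCB hMC
  have hCA : C ⊆ A := by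
    by_contra hnot
    have hno : ¬ Overlap C A := hCaut.2.2 A hA
    have hAC : A ⊆ C := by
      by_contra hAC
      obtain ⟨x, hx⟩ := hMaut.2.1
      exact hno ⟨⟨x, hMC hx, hMA hx⟩, hnot, hAC⟩
    have : B ⊆ C := hleast C hCaut ⟨hAC, hnot⟩
    exact hCB.2 this
  exact hMmax C hCaut hCA hMC
end

section
/- Let P be a finite patchwork on a set Ω, let A ∈ P with A ≠ Ω, let B be the least autonomous member of P properly containing A, and let A' ∈ P overlap A. Then the least autonomous member of P properly containing A' is also B. -/
theorem statement7 {Ω : Type*} (P : Set (Set Ω)) (hP : IsPatchwork P) (hfin : P.Finite)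
    (A : Set Ω) (hA : A ∈ P) (hAne : A ≠ Set.univ)
    (B : Set Ω) (hB : Autonomous P B) (hAB : A ⊂ B)
    (hleast : ∀ C : Set Ω, Autonomous P C → A ⊂ C → B ⊆ C)
    (A' : Set Ω) (hA' : A' ∈ P) (hov : Overlap A A') :
    A' ⊂ B ∧ ∀ C : Set Ω, Autonomous P C → A' ⊂ C → B ⊆ C := by
  obtain ⟨hne, hnAA', hnA'A⟩ := hov
  have hBA'ne : (B ∩ A').Nonempty := hne.mono (Set.inter_subset_inter_left _ hAB.subset)
  have hnov : ¬ Overlap B A' := hB.2.2 A' hA'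
  have hA'B : A' ⊆ B := by
    by_contra h
    apply hnov
    refine ⟨hBA'ne, fun hBA' => ?_, h⟩
    exact hnAA' (hAB.subset.trans hBA')
  have hA'ssB : A' ⊂ B := by
    refine ⟨hA'B, fun h => ?_⟩
    exact hnAA' (hAB.subset.trans h)
  refine ⟨hA'ssB, fun C hC hA'C => ?_⟩
  have hnovC : ¬ Overlap C A := hC.2.2 A hA
  have hCAne : (C ∩ A).Nonempty := by
    obtain ⟨x, hxA, hxA'⟩ := hne
    exact ⟨x, hA'C.subset hxA', hxA⟩
  have hAC : A ⊆ C := by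
    by_contra h
    apply hnovC
    refine ⟨hCAne, fun hCA => ?_, h⟩
    exact hnA'A (hA'C.subset.trans hCA)
  have hAssC : A ⊂ C := by
    refine ⟨hAC, fun h => ?_⟩
    exact hnA'A (hA'C.subset.trans h)
  exact hleast C hC hAssC
end

section
/- Let P be a finite patchwork on a set Ω, let A ∈ P be nonempty, not autonomous, and with A ≠ Ω, and let B be the least autonomous member of P properly containing A. Then A can be written as the disjoint union of two nonempty members A₁, A₂ of P, each of which is a union of members of the cohort under B. -/
/-!
Since `A` is not autonomous it overlaps some `D ∈ P`, and `A` splits into the members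
`A ∩ D` and `A \ D`. Every point of `A` lies in an autonomous member inside `A` (a minimal
member of `P` through it), hence in a maximal autonomous proper subset `M` of `B`. As `M` is
autonomous, it is nested with `A` or disjoint from it; it cannot properly contain `A` by
leastness of `B`, so `M ⊆ A`. Likewise `M` is nested with `D` or disjoint from it, and `D ⊄ M`,
so `M` lies inside `A ∩ D` or inside `A \ D`. Thus both parts are unions of cohort members.
-/

section

open Set

variable {Ω : Type*}

theorem exists_sUnion_eq_of_forall_mem_subset {𝒞 : Set (Set Ω)} {X : Set Ω}
    (h : ∀ x ∈ X, ∃ M ∈ 𝒞, x ∈ M ∧ M ⊆ X) : ∃ F ⊆ 𝒞, X = ⋃₀ F :=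
  ⟨{M | M ∈ 𝒞 ∧ M ⊆ X}, fun _ hM => hM.1,
    Subset.antisymm
      (fun x hx => let ⟨M, hM, hxM, hMX⟩ := h x hx; ⟨M, ⟨hM, hMX⟩, hxM⟩)
      (sUnion_subset fun _ hM => hM.2)⟩

theorem exists_sUnion_eq_inter_and_diff {𝒞 : Set (Set Ω)} {A D : Set Ω}
    (h : ∀ x ∈ A, ∃ M ∈ 𝒞, x ∈ M ∧ M ⊆ A ∧ (M ⊆ D ∨ Disjoint M D)) :
    (∃ F ⊆ 𝒞, A ∩ D = ⋃₀ F) ∧ (∃ F ⊆ 𝒞, A \ D = ⋃₀ F) := by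
  constructor <;> apply exists_sUnion_eq_of_forall_mem_subset
  · rintro x ⟨hxA, hxD⟩
    obtain ⟨M, hM, hxM, hMA, hMD | hMD⟩ := h x hxA
    · exact ⟨M, hM, hxM, subset_inter hMA hMD⟩
    · exact absurd hxD (disjoint_left.mp hMD hxM)
  · rintro x ⟨hxA, hxD⟩
    obtain ⟨M, hM, hxM, hMA, hMD | hMD⟩ := h x hxA
    · exact absurd (hMD hxM) hxD
    · exact ⟨M, hM, hxM, fun y hy => ⟨hMA hy, disjoint_left.mp hMD hy⟩⟩

theorem Autonomous.subset_or_subset_or_disjoint {P : Set (Set Ω)} {M D : Set Ω}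
    (hM : Autonomous P M) (hD : D ∈ P) : M ⊆ D ∨ D ⊆ M ∨ Disjoint M D := by
  by_contra! h
  exact hM.2.2 D hD ⟨not_disjoint_iff_nonempty_inter.mp h.2.2, h.1, h.2.1⟩

theorem IsPatchwork.exists_autonomous_mem_subset_s8 {P : Set (Set Ω)} (hP : IsPatchwork P)
    (hfin : P.Finite) {A : Set Ω} (hA : A ∈ P) {x : Ω} (hx : x ∈ A) :
    ∃ S, Autonomous P S ∧ x ∈ S ∧ S ⊆ A := by
  have hfin' : {C | C ∈ P ∧ x ∈ C}.Finite := hfin.subset fun _ hC => hC.1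
  obtain ⟨S, hSA, hmin⟩ := hfin'.exists_le_minimal (show A ∈ {C | C ∈ P ∧ x ∈ C} from ⟨hA, hx⟩)
  refine ⟨S, ⟨hmin.prop.1, ⟨x, hmin.prop.2⟩, fun E hE hSE => ?_⟩, hmin.prop.2, hSA⟩
  obtain ⟨hinter, -, hdiff⟩ := hP.2.2 S hmin.prop.1 E hE hSE
  -- whichever of `S ∩ E`, `S \ E` contains `x` is a smaller member through `x`
  by_cases hxE : x ∈ E
  · exact hSE.2.1 (hmin.eq_of_subset ⟨hinter, hmin.prop.2, hxE⟩ inter_subset_left ▸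
      inter_subset_right)
  · obtain ⟨y, hyS, hyE⟩ := hSE.1
    exact (hmin.eq_of_subset ⟨hdiff, hmin.prop.2, hxE⟩ sdiff_subset ▸ hyS).2 hyE

theorem exists_mem_cohort_superset {P : Set (Set Ω)} (hfin : P.Finite) {S B : Set Ω}
    (hS : Autonomous P S) (hSB : S ⊂ B) : ∃ M ∈ Cohort P B, S ⊆ M := by
  have hfin' : {C | Autonomous P C ∧ C ⊂ B}.Finite := hfin.subset fun _ hC => hC.1.1
  obtain ⟨M, hSM, hmax⟩ := hfin'.exists_le_maximal
    (show S ∈ {C | Autonomous P C ∧ C ⊂ B} from ⟨hS, hSB⟩)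
  refine ⟨M, ⟨hmax.prop.1, hmax.prop.2, fun C hC hCB hMC => ?_⟩, hSM⟩
  exact hmax.eq_of_subset ⟨hC, hCB⟩ hMC

theorem exists_mem_cohort_mem_subset {P : Set (Set Ω)} (hP : IsPatchwork P) (hfin : P.Finite)
    {A B : Set Ω} (hA : A ∈ P) (hnaut : ¬ Autonomous P A) (hAB : A ⊂ B)
    (hleast : ∀ C : Set Ω, Autonomous P C → A ⊂ C → B ⊆ C) {x : Ω} (hx : x ∈ A) :
    ∃ M ∈ Cohort P B, x ∈ M ∧ M ⊆ A := by
  obtain ⟨S, hS, hxS, hSA⟩ := hP.exists_autonomous_mem_subset_s8 hfin hA hx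
  obtain ⟨M, hM, hSM⟩ := exists_mem_cohort_superset hfin hS (hSA.trans_ssubset hAB)
  refine ⟨M, hM, hSM hxS, ?_⟩
  rcases hM.1.subset_or_subset_or_disjoint hA with hMA | hAM | hMA
  · exact hMA
  · have hAM : A ⊂ M := hAM.ssubset_of_ne fun h => hnaut (h ▸ hM.1)
    exact absurd (hleast M hM.1 hAM) hM.2.1.not_subset
  · exact absurd (hSA hxS) (disjoint_left.mp hMA (hSM hxS))

end

theorem statement8_general {Ω : Type*} (P : Set (Set Ω)) (hP : IsPatchwork P) (hfin : P.Finite)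
    (A : Set Ω) (hA : A ∈ P) (hne : A.Nonempty) (hnaut : ¬ Autonomous P A)
    (B : Set Ω) (hAB : A ⊂ B)
    (hleast : ∀ C : Set Ω, Autonomous P C → A ⊂ C → B ⊆ C) :
    ∃ A₁ A₂ : Set Ω, A₁ ∈ P ∧ A₂ ∈ P ∧ A₁.Nonempty ∧ A₂.Nonempty ∧
      Disjoint A₁ A₂ ∧ A = A₁ ∪ A₂ ∧
      (∃ F ⊆ Cohort P B, A₁ = ⋃₀ F) ∧ (∃ F ⊆ Cohort P B, A₂ = ⋃₀ F) := by
  obtain ⟨D, hD, hAD⟩ : ∃ D ∈ P, Overlap A D := by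
    by_contra! h
    exact hnaut ⟨hA, hne, h⟩
  obtain ⟨hinter, -, hdiff⟩ := hP.2.2 A hA D hD hAD
  have hcover : ∀ x ∈ A, ∃ M ∈ Cohort P B, x ∈ M ∧ M ⊆ A ∧ (M ⊆ D ∨ Disjoint M D) := by
    intro x hx
    obtain ⟨M, hM, hxM, hMA⟩ := exists_mem_cohort_mem_subset hP hfin hA hnaut hAB hleast hx
    have hDM : ¬ D ⊆ M := fun h => hAD.2.2 (h.trans hMA)
    refine ⟨M, hM, hxM, hMA, ?_⟩
    exact (hM.1.subset_or_subset_or_disjoint hD).imp_right (·.resolve_left hDM)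
  obtain ⟨h₁, h₂⟩ := exists_sUnion_eq_inter_and_diff hcover
  exact ⟨A ∩ D, A \ D, hinter, hdiff, hAD.1, Set.sdiff_nonempty.mpr hAD.2.1,
    Set.disjoint_sdiff_inter.symm, (Set.inter_union_sdiff A D).symm, h₁, h₂⟩

theorem statement8 {Ω : Type*} (P : Set (Set Ω)) (hP : IsPatchwork P) (hfin : P.Finite)
    (A : Set Ω) (hA : A ∈ P) (hne : A.Nonempty) (hnaut : ¬ Autonomous P A)
    (hAne : A ≠ Set.univ)
    (B : Set Ω) (hB : Autonomous P B) (hAB : A ⊂ B)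
    (hleast : ∀ C : Set Ω, Autonomous P C → A ⊂ C → B ⊆ C) :
    ∃ A₁ A₂ : Set Ω, A₁ ∈ P ∧ A₂ ∈ P ∧ A₁.Nonempty ∧ A₂.Nonempty ∧
      Disjoint A₁ A₂ ∧ A = A₁ ∪ A₂ ∧
      (∃ F ⊆ Cohort P B, A₁ = ⋃₀ F) ∧ (∃ F ⊆ Cohort P B, A₂ = ⋃₀ F) :=
  statement8_general P hP hfin A hA hne hnaut B hAB hleast
end

section
/- Let P be a finite patchwork on a set Ω and let A be an autonomous member of P which is adjacent to more than two other autonomous members of P. Then every two distinct autonomous members of P adjacent to A are adjacent to one another. Moreover, letting B be the least autonomous member of P properly containing A, in the adjacency graph of the cohort under B any two distinct members of the connected component of A are adjacent. -/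
section aux
variable {Ω : Type*} {P : Set (Set Ω)} {A C D E : Set Ω}

lemma adj_symm (h : Adjacent P A C) : Adjacent P C A :=
  ⟨h.1.symm, Set.union_comm A C ▸ h.2⟩

lemma auto_tri (hC : Autonomous P C) (hD : Autonomous P D) :
    C ⊆ D ∨ D ⊆ C ∨ Disjoint C D := by
  have h := hC.2.2 D hD.1
  by_cases h1 : C ⊆ D
  · exact Or.inl h1
  by_cases h2 : D ⊆ C
  · exact Or.inr (Or.inl h2)
  right; right
  rw [Set.disjoint_iff_inter_eq_empty, ← Set.not_nonempty_iff_eq_empty]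
  exact fun hne => h ⟨hne, h1, h2⟩

lemma nbr_disj (hA : Autonomous P A) (hC : Autonomous P C) (hD : Autonomous P D)
    (hAC : Adjacent P A C) (hAD : Adjacent P A D) (hCD : C ≠ D) :
    Disjoint C D := by
  obtain ⟨a, ha⟩ := hA.2.1
  rcases auto_tri hC hD with h | h | h
  · exfalso
    apply hD.2.2 (A ∪ C) hAC.2
    obtain ⟨c, hc⟩ := hC.2.1
    obtain ⟨d, hdD, hdC⟩ := Set.not_subset.mp (fun hDC => hCD (subset_antisymm h hDC))
    have haD : a ∉ D := Set.disjoint_left.mp hAD.1 ha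
    have hdA : d ∉ A := fun hdA => Set.disjoint_left.mp hAD.1 hdA hdD
    exact ⟨⟨c, h hc, Or.inr hc⟩, fun hs => ((hs hdD).elim hdA hdC),
      fun hs => haD (hs (Or.inl ha))⟩
  · exfalso
    apply hC.2.2 (A ∪ D) hAD.2
    obtain ⟨d, hd⟩ := hD.2.1
    obtain ⟨c, hcC, hcD⟩ := Set.not_subset.mp (fun hCD' => hCD (subset_antisymm hCD' h))
    have haC : a ∉ C := Set.disjoint_left.mp hAC.1 ha
    have hcA : c ∉ A := fun hcA => Set.disjoint_left.mp hAC.1 hcA hcC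
    exact ⟨⟨d, h hd, Or.inr hd⟩, fun hs => ((hs hcC).elim hcA hcD),
      fun hs => haC (hs (Or.inl ha))⟩
  · exact h

lemma union3_mem (hP : IsPatchwork P) (hA : Autonomous P A) (hC : Autonomous P C)
    (hD : Autonomous P D) (hAC : Adjacent P A C) (hAD : Adjacent P A D) (hCD : C ≠ D) :
    A ∪ C ∪ D ∈ P := by
  have hdisj := nbr_disj hA hC hD hAC hAD hCD
  obtain ⟨a, ha⟩ := hA.2.1
  obtain ⟨c, hc⟩ := hC.2.1
  obtain ⟨d, hd⟩ := hD.2.1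
  have hcA : c ∉ A := Set.disjoint_right.mp hAC.1 hc
  have hcD : c ∉ D := Set.disjoint_left.mp hdisj hc
  have hdA : d ∉ A := Set.disjoint_right.mp hAD.1 hd
  have hdC : d ∉ C := Set.disjoint_right.mp hdisj hd
  have hov : Overlap (A ∪ C) (A ∪ D) :=
    ⟨⟨a, Or.inl ha, Or.inl ha⟩, fun hs => ((hs (Or.inr hc)).elim hcA hcD),
      fun hs => ((hs (Or.inr hd)).elim hdA hdC)⟩
  have hm := (hP.2.2 _ hAC.2 _ hAD.2 hov).2.1
  have heq : (A ∪ C) ∪ (A ∪ D) = A ∪ C ∪ D := by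
    ext x; simp only [Set.mem_union]; tauto
  rwa [heq] at hm

lemma part1 (hP : IsPatchwork P) (hA : Autonomous P A)
    (hC : Autonomous P C) (hD : Autonomous P D)
    (hAC : Adjacent P A C) (hAD : Adjacent P A D) (hCD : C ≠ D)
    (hE : Autonomous P E) (hAE : Adjacent P A E)
    (hEC : E ≠ C) (hED : E ≠ D) : Adjacent P C D := by
  have hCDd := nbr_disj hA hC hD hAC hAD hCD
  have hECd := nbr_disj hA hE hC hAE hAC hEC
  have hEDd := nbr_disj hA hE hD hAE hAD hED
  have h3 : A ∪ C ∪ D ∈ P := union3_mem hP hA hC hD hAC hAD hCD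
  obtain ⟨a, ha⟩ := hA.2.1
  obtain ⟨c, hc⟩ := hC.2.1
  obtain ⟨e, he⟩ := hE.2.1
  have hcA : c ∉ A := Set.disjoint_right.mp hAC.1 hc
  have hcE : c ∉ E := Set.disjoint_right.mp hECd hc
  have heA : e ∉ A := Set.disjoint_right.mp hAE.1 he
  have heC : e ∉ C := Set.disjoint_left.mp hECd he
  have heD : e ∉ D := Set.disjoint_left.mp hEDd he
  have hov : Overlap (A ∪ C ∪ D) (A ∪ E) := by
    refine ⟨⟨a, Or.inl (Or.inl ha), Or.inl ha⟩, ?_, ?_⟩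
    · intro hs; exact ((hs (Or.inl (Or.inr hc))).elim hcA hcE)
    · intro hs; rcases hs (Or.inr he) with (h | h) | h
      exacts [heA h, heC h, heD h]
  have hm := (hP.2.2 _ h3 _ hAE.2 hov).2.2
  have heq : (A ∪ C ∪ D) \ (A ∪ E) = C ∪ D := by
    ext x
    simp only [Set.mem_diff, Set.mem_union, not_or]
    constructor
    · rintro ⟨(hx | hx) | hx, hnA, hnE⟩
      exacts [absurd hx hnA, Or.inl hx, Or.inr hx]
    · rintro (hx | hx)
      · exact ⟨Or.inl (Or.inr hx), Set.disjoint_right.mp hAC.1 hx,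
          Set.disjoint_right.mp hECd hx⟩
      · exact ⟨Or.inr hx, Set.disjoint_right.mp hAD.1 hx,
          Set.disjoint_right.mp hEDd hx⟩
  rw [heq] at hm
  exact ⟨hCDd, hm⟩

end aux

theorem statement10 {Ω : Type*} (P : Set (Set Ω)) (hP : IsPatchwork P) (hfin : P.Finite)
    (A : Set Ω) (hA : Autonomous P A)
    (hmany : ∃ C₁ C₂ C₃ : Set Ω, C₁ ≠ C₂ ∧ C₁ ≠ C₃ ∧ C₂ ≠ C₃ ∧
      Autonomous P C₁ ∧ Autonomous P C₂ ∧ Autonomous P C₃ ∧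
      Adjacent P A C₁ ∧ Adjacent P A C₂ ∧ Adjacent P A C₃)
    (B : Set Ω) (hB : Autonomous P B) (hAB : A ⊂ B)
    (hleast : ∀ C : Set Ω, Autonomous P C → A ⊂ C → B ⊆ C) :
    (∀ C D : Set Ω, Autonomous P C → Autonomous P D → Adjacent P A C → Adjacent P A D →
      C ≠ D → Adjacent P C D) ∧
    (∀ C D : Set Ω,
      Relation.ReflTransGen
        (fun X Y : Set Ω => X ∈ Cohort P B ∧ Y ∈ Cohort P B ∧ Adjacent P X Y) A C →
      Relation.ReflTransGen
        (fun X Y : Set Ω => X ∈ Cohort P B ∧ Y ∈ Cohort P B ∧ Adjacent P X Y) A D →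
      C ≠ D → Adjacent P C D) := by
  obtain ⟨C₁, C₂, C₃, h12, h13, h23, hC₁, hC₂, hC₃, hAC₁, hAC₂, hAC₃⟩ := hmany
  -- a picker for a third neighbor distinct from any given two sets
  have pick : ∀ C D : Set Ω, ∃ E, Autonomous P E ∧ Adjacent P A E ∧ E ≠ C ∧ E ≠ D := by
    intro C D
    by_cases h1 : C₁ ≠ C ∧ C₁ ≠ D
    · exact ⟨C₁, hC₁, hAC₁, h1⟩
    by_cases h2 : C₂ ≠ C ∧ C₂ ≠ D
    · exact ⟨C₂, hC₂, hAC₂, h2⟩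
    by_cases h3 : C₃ ≠ C ∧ C₃ ≠ D
    · exact ⟨C₃, hC₃, hAC₃, h3⟩
    exfalso
    rw [not_and_or, not_ne_iff, not_ne_iff] at h1 h2 h3
    rcases h1 with rfl | rfl <;> rcases h2 with rfl | rfl <;>
      rcases h3 with rfl | rfl <;> simp_all
  have key : ∀ C D : Set Ω, Autonomous P C → Autonomous P D → Adjacent P A C →
      Adjacent P A D → C ≠ D → Adjacent P C D := by
    intro C D hC hD hAC hAD hCD
    obtain ⟨E, hE, hAE, hEC, hED⟩ := pick C D
    exact part1 hP hA hC hD hAC hAD hCD hE hAE hEC hED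
  refine ⟨key, ?_⟩
  -- A is in the cohort under B
  have hAcoh : A ∈ Cohort P B := by
    refine ⟨hA, hAB, fun C hC hCB hACsub => ?_⟩
    by_contra hne
    exact hCB.ne (le_antisymm hCB.le (hleast C hC (hACsub.ssubset_of_ne hne)))
  -- the key step: neighbors in the cohort of neighbors of A are neighbors of A
  have step : ∀ X Y : Set Ω, Autonomous P X → Adjacent P A X → Y ∈ Cohort P B →
      Adjacent P X Y → Y ≠ A → Adjacent P A Y := by
    intro X Y hX hAX hYcoh hXY hYA
    obtain ⟨hY, hYB, hYmax⟩ := hYcoh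
    obtain ⟨a, ha⟩ := hA.2.1
    obtain ⟨x, hx⟩ := hX.2.1
    obtain ⟨y, hy⟩ := hY.2.1
    -- A and Y are disjoint
    have hAYd : Disjoint A Y := by
      rcases auto_tri hA hY with h | h | h
      · exact absurd (hAcoh.2.2 Y hY hYB h).symm hYA
      · exact absurd (hYmax A hA hAB h) hYA
      · exact h
    have hXYne : X ≠ Y := by
      rintro rfl
      exact Set.disjoint_left.mp hXY.1 hx hx
    obtain ⟨E, hE, hAE, hEX, hEY⟩ := pick X Y
    obtain ⟨e, he⟩ := hE.2.1
    have hEXd : Disjoint E X := nbr_disj hA hE hX hAE hAX hEX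
    -- E and Y are disjoint
    have hEYd : Disjoint E Y := by
      rcases auto_tri hE hY with h | h | h
      · -- E ⊆ Y leads to overlap of Y with A ∪ E
        exfalso
        apply hY.2.2 (A ∪ E) hAE.2
        refine ⟨⟨e, h he, Or.inr he⟩, ?_, ?_⟩
        · intro hs
          have hYE : Y ⊆ E := fun z hz => ((hs hz).elim
            (fun hzA => absurd hz (Set.disjoint_left.mp hAYd hzA)) id)
          exact hEY (subset_antisymm h hYE)
        · intro hs
          exact Set.disjoint_left.mp hAYd ha (hs (Or.inl ha))
      · -- Y ⊆ E : then E is an autonomous proper subset of B, contradicting maximality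
        exfalso
        have haE : a ∉ E := Set.disjoint_left.mp hAE.1 ha
        have hEB : E ⊆ B := by
          rcases auto_tri hE hB with h' | h' | h'
          · exact h'
          · exact absurd (h' (hAB.subset ha)) haE
          · exact absurd (hYB.subset hy) (Set.disjoint_left.mp h' (h hy))
        have hEBss : E ⊂ B := hEB.ssubset_of_ne (fun hEq => haE (hEq ▸ hAB.subset ha))
        exact hEY (hYmax E hE hEBss h).symm
      · exact h
    have hXEmem : X ∪ E ∈ P := (key X E hX hE hAX hAE (Ne.symm hEX)).2
    -- pointwise disjointness facts
    have haX : a ∉ X := Set.disjoint_left.mp hAX.1 ha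
    have haY : a ∉ Y := Set.disjoint_left.mp hAYd ha
    have haE : a ∉ E := Set.disjoint_left.mp hAE.1 ha
    have hyA : y ∉ A := Set.disjoint_right.mp hAYd hy
    have hyX : y ∉ X := Set.disjoint_right.mp hXY.1 hy
    have heA : e ∉ A := Set.disjoint_right.mp hAE.1 he
    have heX : e ∉ X := Set.disjoint_left.mp hEXd he
    have heY : e ∉ Y := Set.disjoint_left.mp hEYd he
    -- A ∪ X ∪ Y ∈ P
    have hov1 : Overlap (A ∪ X) (X ∪ Y) :=
      ⟨⟨x, Or.inr hx, Or.inl hx⟩,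
        fun hs => ((hs (Or.inl ha)).elim haX haY),
        fun hs => ((hs (Or.inr hy)).elim hyA hyX)⟩
    have hm1 := (hP.2.2 _ hAX.2 _ hXY.2 hov1).2.1
    have heq1 : (A ∪ X) ∪ (X ∪ Y) = A ∪ X ∪ Y := by
      ext z; simp only [Set.mem_union]; tauto
    rw [heq1] at hm1
    -- (A ∪ X ∪ Y) \ (X ∪ E) = A ∪ Y ∈ P
    have hov2 : Overlap (A ∪ X ∪ Y) (X ∪ E) := by
      refine ⟨⟨x, Or.inl (Or.inr hx), Or.inl hx⟩, ?_, ?_⟩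
      · intro hs; exact ((hs (Or.inl (Or.inl ha))).elim haX haE)
      · intro hs; rcases hs (Or.inr he) with (h | h) | h
        exacts [heA h, heX h, heY h]
    have hm2 := (hP.2.2 _ hm1 _ hXEmem hov2).2.2
    have heq2 : (A ∪ X ∪ Y) \ (X ∪ E) = A ∪ Y := by
      ext z
      simp only [Set.mem_diff, Set.mem_union, not_or]
      constructor
      · rintro ⟨(hz | hz) | hz, hnX, hnE⟩
        exacts [Or.inl hz, absurd hz hnX, Or.inr hz]
      · rintro (hz | hz)
        · exact ⟨Or.inl (Or.inl hz), Set.disjoint_left.mp hAX.1 hz,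
            Set.disjoint_left.mp hAE.1 hz⟩
        · exact ⟨Or.inr hz, Set.disjoint_right.mp hXY.1 hz,
            Set.disjoint_right.mp hEYd hz⟩
    rw [heq2] at hm2
    exact ⟨hAYd, hm2⟩
  -- every member of the component of A is A or an autonomous neighbor of A
  have comp : ∀ C : Set Ω,
      Relation.ReflTransGen
        (fun X Y : Set Ω => X ∈ Cohort P B ∧ Y ∈ Cohort P B ∧ Adjacent P X Y) A C →
      C = A ∨ (Autonomous P C ∧ Adjacent P A C) := by
    intro C h
    induction h with
    | refl => exact Or.inl rfl
    | tail _ hstep ih =>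
      rename_i b c _
      obtain ⟨hbcoh, hccoh, hbc⟩ := hstep
      by_cases hcA : c = A
      · exact Or.inl hcA
      rcases ih with rfl | ⟨hbauto, hAb⟩
      · exact Or.inr ⟨hccoh.1, hbc⟩
      · exact Or.inr ⟨hccoh.1, step b c hbauto hAb hccoh hbc hcA⟩
  intro C D hCr hDr hCD
  rcases comp C hCr with rfl | ⟨hCa, hAC'⟩
  · rcases comp D hDr with rfl | ⟨hDa, hAD'⟩
    · exact absurd rfl hCD
    · exact hAD'
  · rcases comp D hDr with rfl | ⟨hDa, hAD'⟩
    · exact adj_symm hAC'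
    · exact key C D hCa hDa hAC' hAD' hCD
end

section
/- Let P be a finite patchwork on a set Ω and suppose A₁, …, Aₙ (n ≥ 3) are distinct autonomous members of P forming a cycle of adjacency: Aᵢ is adjacent to Aᵢ₊₁ for 1 ≤ i < n, and Aₙ is adjacent to A₁. Then in the adjacency graph of the cohort containing the Aᵢ (the cohort under the least autonomous member of P properly containing A₁), any two distinct members of the connected component containing these sets are adjacent. -/
section Aux
variable {Ω : Type*} {P : Set (Set Ω)}

lemma not_overlap_cases {A B : Set Ω} (h : ¬ Overlap A B) :
    A ∩ B = ∅ ∨ A ⊆ B ∨ B ⊆ A := by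
  by_contra hc
  push_neg at hc
  exact h ⟨hc.1, hc.2.1, hc.2.2⟩

lemma aut_cases {C D : Set Ω} (hC : Autonomous P C) (hD : D ∈ P)
    (hne : (C ∩ D).Nonempty) : C ⊆ D ∨ D ⊆ C := by
  rcases not_overlap_cases (hC.2.2 D hD) with h | h | h
  · rw [h] at hne; exact absurd hne (by simp)
  · exact Or.inl h
  · exact Or.inr h

lemma cohort_disjoint {B X Y : Set Ω}
    (hX : X ∈ Cohort P B) (hY : Y ∈ Cohort P B) (hne : X ≠ Y) : Disjoint X Y := by
  rcases not_overlap_cases (hX.1.2.2 Y hY.1.1) with h | h | h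
  · exact Set.disjoint_iff_inter_eq_empty.2 h
  · exact absurd (hX.2.2 Y hY.1 hY.2.1 h) hne
  · exact absurd (hY.2.2 X hX.1 hX.2.1 h).symm hne

lemma cohort_step {B X Y : Set Ω} (hP : IsPatchwork P)
    (hB : Autonomous P B) (hX : X ∈ Cohort P B) (hY : Autonomous P Y)
    (hd : Disjoint X Y) (hu : X ∪ Y ∈ P) : Y ∈ Cohort P B := by
  obtain ⟨hXa, hXB, hXmax⟩ := hX
  obtain ⟨x, hx⟩ := hXa.2.1
  obtain ⟨y0, hy0⟩ := hY.2.1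
  have hYB : Y ⊆ B := by
    rcases aut_cases hB hu ⟨x, hXB.subset hx, Or.inl hx⟩ with h | h
    · obtain ⟨b, hbB, hbX⟩ := Set.exists_of_ssubset hXB
      have hbY : b ∈ Y := (h hbB).resolve_left hbX
      rcases aut_cases hY hB.1 ⟨b, hbY, hbB⟩ with h2 | h2
      · exact h2
      · exact absurd (Set.disjoint_left.mp hd hx (h2 (hXB.subset hx))) (fun h => h)
    · exact fun z hz => h (Or.inr hz)
  have hYssB : Y ⊂ B := by
    refine hYB.ssubset_of_ne ?_
    intro hEq
    exact Set.disjoint_left.mp hd hx (hEq ▸ hXB.subset hx)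
  refine ⟨hY, hYssB, ?_⟩
  intro C hCaut hCB hYC
  by_contra hne
  rcases not_overlap_cases (hCaut.2.2 X hXa.1) with h | h | h
  · rcases aut_cases hCaut hu ⟨y0, hYC hy0, Or.inr hy0⟩ with h2 | h2
    · have hCY : C ⊆ Y := by
        intro c hc
        rcases h2 hc with hcX | hcY
        · exact absurd (Set.mem_inter hc hcX) (by rw [h]; simp)
        · exact hcY
      exact hne (Set.Subset.antisymm hYC hCY)
    · exact absurd (Set.mem_inter (h2 (Or.inl hx)) hx) (by rw [h]; simp)
  · exact Set.disjoint_left.mp hd (h (hYC hy0)) hy0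
  · have hXC := hXmax C hCaut hCB h
    exact Set.disjoint_left.mp hd (hXC ▸ hYC hy0) hy0

lemma adjacent_symm {X Y : Set Ω} (h : Adjacent P X Y) : Adjacent P Y X :=
  ⟨h.1.symm, Set.union_comm X Y ▸ h.2⟩

lemma hub (hP : IsPatchwork P) {X Y Z W : Set Ω}
    (hX : X.Nonempty) (hY : Y.Nonempty) (hZ : Z.Nonempty) (hW : W.Nonempty)
    (dYX : Disjoint Y X) (dZX : Disjoint Z X) (dWX : Disjoint W X)
    (dYZ : Disjoint Y Z) (dYW : Disjoint Y W) (dZW : Disjoint Z W)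
    (hXY : X ∪ Y ∈ P) (hXZ : X ∪ Z ∈ P) (hXW : X ∪ W ∈ P) :
    Y ∪ Z ∈ P := by
  obtain ⟨x, hx⟩ := hX
  obtain ⟨y, hy⟩ := hY
  obtain ⟨z, hz⟩ := hZ
  obtain ⟨w, hw⟩ := hW
  have hcl := hP.2.2
  have h1 : Overlap (X ∪ Y) (X ∪ Z) := by
    refine ⟨⟨x, Or.inl hx, Or.inl hx⟩, ?_, ?_⟩
    · intro h
      rcases h (Or.inr hy) with h' | h'
      · exact Set.disjoint_left.mp dYX hy h'
      · exact Set.disjoint_left.mp dYZ hy h'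
    · intro h
      rcases h (Or.inr hz) with h' | h'
      · exact Set.disjoint_left.mp dZX hz h'
      · exact Set.disjoint_left.mp dYZ h' hz
  have h2 : (X ∪ Y) ∪ (X ∪ Z) ∈ P := (hcl _ hXY _ hXZ h1).2.1
  have h3 : Overlap ((X ∪ Y) ∪ (X ∪ Z)) (X ∪ W) := by
    refine ⟨⟨x, Or.inl (Or.inl hx), Or.inl hx⟩, ?_, ?_⟩
    · intro h
      rcases h (Or.inl (Or.inr hy)) with h' | h'
      · exact Set.disjoint_left.mp dYX hy h'
      · exact Set.disjoint_left.mp dYW hy h'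
    · intro h
      rcases h (Or.inr hw) with (h' | h') | (h' | h')
      · exact Set.disjoint_left.mp dWX hw h'
      · exact Set.disjoint_left.mp dYW.symm hw h'
      · exact Set.disjoint_left.mp dWX hw h'
      · exact Set.disjoint_left.mp dZW.symm hw h'
  have h4 : ((X ∪ Y) ∪ (X ∪ Z)) \ (X ∪ W) ∈ P := (hcl _ h2 _ hXW h3).2.2
  have h5 : ((X ∪ Y) ∪ (X ∪ Z)) \ (X ∪ W) = Y ∪ Z := by
    ext a
    simp only [Set.mem_diff, Set.mem_union]
    constructor
    · rintro ⟨(h' | h') | (h' | h'), hnot⟩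
      · exact absurd (Or.inl h') hnot
      · exact Or.inl h'
      · exact absurd (Or.inl h') hnot
      · exact Or.inr h'
    · rintro (h' | h')
      · exact ⟨Or.inl (Or.inr h'), fun hc => hc.elim
          (fun hc => Set.disjoint_left.mp dYX h' hc)
          (fun hc => Set.disjoint_left.mp dYW h' hc)⟩
      · exact ⟨Or.inr (Or.inr h'), fun hc => hc.elim
          (fun hc => Set.disjoint_left.mp dZX h' hc)
          (fun hc => Set.disjoint_left.mp dZW h' hc)⟩
  exact h5 ▸ h4

end Aux

theorem statement11 {Ω : Type*} (P : Set (Set Ω)) (hP : IsPatchwork P) (hfin : P.Finite)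
    (n : ℕ) (hn : 3 ≤ n) (A : Fin n → Set Ω) (hinj : Function.Injective A)
    (haut : ∀ i : Fin n, Autonomous P (A i))
    (hcyc : ∀ i : Fin n, Adjacent P (A i) (A ⟨(i.1 + 1) % n, Nat.mod_lt _ (by omega)⟩))
    (B : Set Ω) (hB : Autonomous P B) (hAB : A ⟨0, by omega⟩ ⊂ B)
    (hleast : ∀ C : Set Ω, Autonomous P C → A ⟨0, by omega⟩ ⊂ C → B ⊆ C) :
    ∀ C D : Set Ω,
      Relation.ReflTransGen
        (fun X Y : Set Ω => X ∈ Cohort P B ∧ Y ∈ Cohort P B ∧ Adjacent P X Y) (A ⟨0, by omega⟩) C →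
      Relation.ReflTransGen
        (fun X Y : Set Ω => X ∈ Cohort P B ∧ Y ∈ Cohort P B ∧ Adjacent P X Y) (A ⟨0, by omega⟩) D →
      C ≠ D → Adjacent P C D := by
  intro C D hC hD hCD
  have hnpos : 0 < n := by omega
  -- Step 1: A 0 is in the cohort under B
  have h0coh : A ⟨0, hnpos⟩ ∈ Cohort P B := by
    refine ⟨haut _, hAB, ?_⟩
    intro C hCaut hCB hsub
    by_contra hne
    exact hCB.not_subset (hleast C hCaut (hsub.ssubset_of_ne hne))
  -- Step 2: all A k are in the cohort under B
  have hcoh : ∀ k, ∀ h : k < n, A ⟨k, h⟩ ∈ Cohort P B := by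
    intro k
    induction k with
    | zero => intro h; exact h0coh
    | succ k ih =>
      intro h
      have hk : k < n := by omega
      have hadj := hcyc ⟨k, hk⟩
      have hidx : ((k + 1) % n) = k + 1 := Nat.mod_eq_of_lt h
      have : A ⟨(k + 1) % n, Nat.mod_lt _ (by omega)⟩ = A ⟨k + 1, h⟩ :=
        congrArg A (Fin.ext hidx)
      rw [this] at hadj
      exact cohort_step hP hB (ih hk) (haut _) hadj.1 hadj.2
  -- ℕ-indexed version of A
  let A' : ℕ → Set Ω := fun m => A ⟨m % n, Nat.mod_lt _ hnpos⟩
  have hA'eq : ∀ a b : ℕ, a % n = b % n → A' a = A' b := by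
    intro a b h
    exact congrArg A (Fin.ext h)
  have hA'inj : ∀ a b : ℕ, A' a = A' b → a % n = b % n := by
    intro a b h
    have := hinj h
    exact congrArg Fin.val this
  have hA'coh : ∀ m : ℕ, A' m ∈ Cohort P B := fun m => hcoh _ (Nat.mod_lt _ hnpos)
  have hA'ne : ∀ m : ℕ, (A' m).Nonempty := fun m => (haut _).2.1
  have hdis : ∀ a b : ℕ, a % n ≠ b % n → Disjoint (A' a) (A' b) := by
    intro a b h
    exact cohort_disjoint (hA'coh a) (hA'coh b) (fun hEq => h (hA'inj a b hEq))
  have hmodne : ∀ i s t : ℕ, s < n → t < n → s ≠ t → (i + s) % n ≠ (i + t) % n := by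
    intro i s t hs ht hst h
    have h2 : s ≡ t [MOD n] := Nat.ModEq.add_left_cancel' i h
    rw [Nat.ModEq, Nat.mod_eq_of_lt hs, Nat.mod_eq_of_lt ht] at h2
    exact hst h2
  have hcyc' : ∀ m : ℕ, A' m ∪ A' (m + 1) ∈ P := by
    intro m
    have h := (hcyc ⟨m % n, Nat.mod_lt _ hnpos⟩).2
    have he : A ⟨(m % n + 1) % n, Nat.mod_lt _ (by omega)⟩ = A' (m + 1) := by
      refine congrArg A (Fin.ext ?_)
      show (m % n + 1) % n = (m + 1) % n
      conv_rhs => rw [Nat.add_mod]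
      rw [Nat.mod_eq_of_lt (show 1 < n by omega)]
    rw [he] at h
    exact h
  have hd' : ∀ s t : ℕ, s < n → t < n → s ≠ t → Disjoint (A' s) (A' t) := by
    intro s t hs ht hst
    exact hdis s t (by rw [Nat.mod_eq_of_lt hs, Nat.mod_eq_of_lt ht]; exact hst)
  -- arcs of the cycle lie in P
  have arcP : ∀ d i : ℕ, 1 ≤ d → d ≤ n - 1 → (⋃ t ∈ Finset.range (d + 1), A' (i + t)) ∈ P := by
    intro d
    induction d with
    | zero => intro i h1 h2; omega
    | succ d ih =>
      intro i h1 h2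
      by_cases hd0 : d = 0
      · subst hd0
        have heq : (⋃ t ∈ Finset.range 2, A' (i + t)) = A' i ∪ A' (i + 1) := by
          ext x
          simp only [Set.mem_iUnion, Finset.mem_range, Set.mem_union, exists_prop]
          constructor
          · rintro ⟨t, ht, hx⟩
            interval_cases t
            · exact Or.inl hx
            · exact Or.inr hx
          · rintro (hx | hx)
            · exact ⟨0, by omega, hx⟩
            · exact ⟨1, by omega, hx⟩
        rw [heq]
        exact hcyc' i
      · have hU := ih i (by omega) (by omega)
        have hV := hcyc' (i + d)
        have hov : Overlap (⋃ t ∈ Finset.range (d + 1), A' (i + t)) (A' (i + d) ∪ A' (i + d + 1)) := by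
          obtain ⟨x, hx⟩ := hA'ne (i + d)
          refine ⟨⟨x, ?_, Or.inl hx⟩, ?_, ?_⟩
          · exact Set.mem_iUnion₂.mpr ⟨d, Finset.mem_range.mpr (by omega), hx⟩
          · intro hsub
            obtain ⟨y, hy⟩ := hA'ne i
            have hyU : y ∈ ⋃ t ∈ Finset.range (d + 1), A' (i + t) :=
              Set.mem_iUnion₂.mpr ⟨0, Finset.mem_range.mpr (by omega), hy⟩
            rcases hsub hyU with h' | h'
            · exact Set.disjoint_left.mp
                (hdis i (i + d) (hmodne i 0 d (by omega) (by omega) (by omega))) hy h'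
            · exact Set.disjoint_left.mp
                (hdis i (i + d + 1) (hmodne i 0 (d + 1) (by omega) (by omega) (by omega))) hy h'
          · intro hsub
            obtain ⟨y, hy⟩ := hA'ne (i + d + 1)
            obtain ⟨t, ht, hyt⟩ := Set.mem_iUnion₂.mp (hsub (Or.inr hy))
            rw [Finset.mem_range] at ht
            exact Set.disjoint_left.mp
              (hdis (i + t) (i + (d + 1)) (hmodne i t (d + 1) (by omega) (by omega) (by omega))) hyt hy
        have hUV := (hP.2.2 _ hU _ hV hov).2.1
        have heq : (⋃ t ∈ Finset.range (d + 1 + 1), A' (i + t)) =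
            (⋃ t ∈ Finset.range (d + 1), A' (i + t)) ∪ (A' (i + d) ∪ A' (i + d + 1)) := by
          ext x
          simp only [Set.mem_iUnion, Finset.mem_range, Set.mem_union, exists_prop]
          constructor
          · rintro ⟨t, ht, hx⟩
            by_cases h' : t < d + 1
            · exact Or.inl ⟨t, h', hx⟩
            · have : t = d + 1 := by omega
              subst this
              exact Or.inr (Or.inr hx)
          · rintro (⟨t, ht, hx⟩ | h' | h')
            · exact ⟨t, by omega, hx⟩
            · exact ⟨d, by omega, h'⟩
            · exact ⟨d + 1, by omega, h'⟩
        rw [heq]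
        exact hUV
  -- A' 0 is adjacent (in P) to every other A' d
  have h0d : ∀ d : ℕ, 1 ≤ d → d ≤ n - 1 → A' 0 ∪ A' d ∈ P := by
    intro d h1 h2
    by_cases hd1 : d = 1
    · subst hd1; exact hcyc' 0
    by_cases hdn : d = n - 1
    · have h := hcyc' d
      have he : A' (d + 1) = A' 0 := by
        refine hA'eq _ _ ?_
        rw [show d + 1 = n by omega, Nat.mod_self, Nat.zero_mod]
      rw [he] at h
      rw [Set.union_comm]
      exact h
    -- now 2 ≤ d ≤ n - 2
    have harc1 := arcP d 0 (by omega) (by omega)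
    have harc2 := arcP (n - d) d (by omega) (by omega)
    have he0 : A' (d + (n - d)) = A' 0 := by
      refine hA'eq _ _ ?_
      rw [show d + (n - d) = n by omega, Nat.mod_self, Nat.zero_mod]
    have hov : Overlap (⋃ t ∈ Finset.range (d + 1), A' (0 + t))
        (⋃ t ∈ Finset.range (n - d + 1), A' (d + t)) := by
      obtain ⟨x, hx⟩ := hA'ne 0
      refine ⟨⟨x, ?_, ?_⟩, ?_, ?_⟩
      · exact Set.mem_iUnion₂.mpr ⟨0, Finset.mem_range.mpr (by omega), hx⟩
      · refine Set.mem_iUnion₂.mpr ⟨n - d, Finset.mem_range.mpr (by omega), ?_⟩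
        rw [he0]; exact hx
      · intro hsub
        obtain ⟨y, hy⟩ := hA'ne 1
        have hy1 : y ∈ ⋃ t ∈ Finset.range (d + 1), A' (0 + t) :=
          Set.mem_iUnion₂.mpr ⟨1, Finset.mem_range.mpr (by omega), hy⟩
        obtain ⟨t, ht, hyt⟩ := Set.mem_iUnion₂.mp (hsub hy1)
        rw [Finset.mem_range] at ht
        have hne : (1 : ℕ) % n ≠ (d + t) % n := by
          rcases Nat.lt_or_ge (d + t) n with h' | h'
          · rw [Nat.mod_eq_of_lt h', Nat.mod_eq_of_lt (by omega)]; omega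
          · rw [show d + t = n by omega, Nat.mod_self, Nat.mod_eq_of_lt (by omega)]; omega
        exact Set.disjoint_left.mp (hdis 1 (d + t) hne) hy hyt
      · intro hsub
        obtain ⟨y, hy⟩ := hA'ne (d + 1)
        have hy1 : y ∈ ⋃ t ∈ Finset.range (n - d + 1), A' (d + t) :=
          Set.mem_iUnion₂.mpr ⟨1, Finset.mem_range.mpr (by omega), hy⟩
        obtain ⟨t, ht, hyt⟩ := Set.mem_iUnion₂.mp (hsub hy1)
        rw [Finset.mem_range] at ht
        have hne : (d + 1) % n ≠ (0 + t) % n := by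
          rw [Nat.zero_add, Nat.mod_eq_of_lt (by omega), Nat.mod_eq_of_lt (by omega)]; omega
        exact Set.disjoint_left.mp (hdis (d + 1) (0 + t) hne) hy hyt
    have hint := (hP.2.2 _ harc1 _ harc2 hov).1
    have heq : (⋃ t ∈ Finset.range (d + 1), A' (0 + t)) ∩
        (⋃ t ∈ Finset.range (n - d + 1), A' (d + t)) = A' 0 ∪ A' d := by
      ext x
      simp only [Set.mem_inter_iff, Set.mem_iUnion, Finset.mem_range, Set.mem_union, exists_prop]
      constructor
      · rintro ⟨⟨a, ha, hxa⟩, ⟨b, hb, hxb⟩⟩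
        have hmods : (0 + a) % n = (d + b) % n := by
          by_contra hne
          exact Set.disjoint_left.mp (hdis _ _ hne) hxa hxb
        rw [Nat.zero_add] at hmods hxa
        rcases Nat.lt_or_ge (d + b) n with h' | h'
        · rw [Nat.mod_eq_of_lt (by omega), Nat.mod_eq_of_lt h'] at hmods
          have : a = d := by omega
          rw [this] at hxa
          exact Or.inr hxa
        · rw [show d + b = n by omega, Nat.mod_self, Nat.mod_eq_of_lt (by omega)] at hmods
          rw [hmods] at hxa
          exact Or.inl hxa
      · rintro (h' | h')
        · refine ⟨⟨0, by omega, h'⟩, ⟨n - d, by omega, ?_⟩⟩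
          rw [he0]; exact h'
        · refine ⟨⟨d, by omega, ?_⟩, ⟨0, by omega, h'⟩⟩
          rw [Nat.zero_add]; exact h'
    rw [heq] at hint
    exact hint
  -- every two distinct A' a, A' b (a, b < n) have union in P
  have hAll : ∀ a b : ℕ, a < n → b < n → a ≠ b → A' a ∪ A' b ∈ P := by
    intro a b ha hb hab
    rcases Nat.eq_zero_or_pos a with ha0 | hapos
    · subst ha0; exact h0d b (by omega) (by omega)
    rcases Nat.eq_zero_or_pos b with hb0 | hbpos
    · subst hb0; rw [Set.union_comm]; exact h0d a (by omega) (by omega)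
    by_cases hsucc : b = a + 1
    · subst hsucc; exact hcyc' a
    by_cases hsucc' : a = b + 1
    · subst hsucc'; rw [Set.union_comm]; exact hcyc' b
    obtain ⟨c, hcn, hc0, hca, hcb⟩ : ∃ c, c < n ∧ c ≠ 0 ∧ c ≠ a ∧ c ≠ b := by
      refine ⟨if a = 1 then (if b = 2 then 3 else 2) else (if b = 1 then (if a = 2 then 3 else 2) else 1), ?_⟩
      split_ifs <;> omega
    exact hub hP (hA'ne 0) (hA'ne a) (hA'ne b) (hA'ne c)
      (hd' a 0 ha hnpos (by omega)) (hd' b 0 hb hnpos (by omega)) (hd' c 0 hcn hnpos hc0)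
      (hd' a b ha hb hab) (hd' a c ha hcn (fun e => hca e.symm)) (hd' b c hb hcn (fun e => hcb e.symm))
      (h0d a (by omega) (by omega)) (h0d b (by omega) (by omega)) (h0d c (by omega) (by omega))
  have hA00 : A ⟨0, hnpos⟩ = A' 0 := congrArg A (Fin.ext (Nat.zero_mod n).symm)
  -- the invariant along the component
  have key : ∀ E : Set Ω,
      Relation.ReflTransGen
        (fun X Y : Set Ω => X ∈ Cohort P B ∧ Y ∈ Cohort P B ∧ Adjacent P X Y) (A ⟨0, hnpos⟩) E →
      E ∈ Cohort P B ∧ ∀ m : ℕ, m < n → E = A' m ∨ E ∪ A' m ∈ P := by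
    intro E hE
    induction hE with
    | refl =>
      refine ⟨h0coh, ?_⟩
      intro m hm
      rcases Nat.eq_zero_or_pos m with h0 | hpos
      · subst h0; exact Or.inl hA00
      · refine Or.inr ?_
        rw [hA00]
        exact hAll 0 m hnpos hm (by omega)
    | @tail E' F hsteps hstep ih =>
      obtain ⟨hEcoh, hFcoh, hEF⟩ := hstep
      obtain ⟨-, ihGood⟩ := ih
      refine ⟨hFcoh, ?_⟩
      intro m hm
      by_cases hF : ∃ k, k < n ∧ F = A' k
      · obtain ⟨k, hk, hFk⟩ := hF
        by_cases hkm : k = m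
        · exact Or.inl (by rw [hFk, hkm])
        · refine Or.inr ?_
          rw [hFk]
          exact hAll k m hk hm hkm
      · push_neg at hF
        refine Or.inr ?_
        by_cases hE : ∃ j, j < n ∧ E' = A' j
        · obtain ⟨j, hj, hEj⟩ := hE
          by_cases hjm : j = m
          · rw [Set.union_comm, ← hjm, ← hEj]
            exact hEF.2
          · obtain ⟨k, hkn, hkj, hkm⟩ : ∃ k, k < n ∧ k ≠ j ∧ k ≠ m :=
              ⟨if j = 0 then (if m = 1 then 2 else 1)
                else (if m = 0 then (if j = 1 then 2 else 1) else 0), by split_ifs <;> omega⟩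
            have hdFj : Disjoint F (A' j) := (hEj ▸ hEF.1).symm
            have hdFm : Disjoint F (A' m) := cohort_disjoint hFcoh (hA'coh m) (hF m hm)
            have hdFk : Disjoint F (A' k) := cohort_disjoint hFcoh (hA'coh k) (hF k hkn)
            exact hub hP (hA'ne j) hFcoh.1.2.1 (hA'ne m) (hA'ne k)
              hdFj (hd' m j hm hj (Ne.symm hjm)) (hd' k j hkn hj hkj)
              hdFm hdFk (hd' m k hm hkn (fun e => hkm e.symm))
              (by rw [← hEj]; exact hEF.2)
              (hAll j m hj hm hjm) (hAll j k hj hkn (fun e => hkj e.symm))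
        · push_neg at hE
          have hEm : E' ∪ A' m ∈ P := (ihGood m hm).resolve_left (hE m hm)
          obtain ⟨k, hkn, hkm⟩ : ∃ k, k < n ∧ k ≠ m :=
            ⟨if m = 0 then 1 else 0, by split_ifs <;> omega⟩
          have hEk : E' ∪ A' k ∈ P := (ihGood k hkn).resolve_left (hE k hkn)
          exact hub hP hEcoh.1.2.1 hFcoh.1.2.1 (hA'ne m) (hA'ne k)
            hEF.1.symm
            (cohort_disjoint (hA'coh m) hEcoh (fun e => hE m hm e.symm))
            (cohort_disjoint (hA'coh k) hEcoh (fun e => hE k hkn e.symm))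
            (cohort_disjoint hFcoh (hA'coh m) (hF m hm))
            (cohort_disjoint hFcoh (hA'coh k) (hF k hkn))
            (hd' m k hm hkn (fun e => hkm e.symm))
            hEF.2 hEm hEk
  obtain ⟨hCcoh, hCgood⟩ := key C hC
  obtain ⟨hDcoh, hDgood⟩ := key D hD
  have hdisCD : Disjoint C D := cohort_disjoint hCcoh hDcoh hCD
  refine ⟨hdisCD, ?_⟩
  by_cases hDr : ∃ m, m < n ∧ D = A' m
  · obtain ⟨m, hm, hDm⟩ := hDr
    rcases hCgood m hm with h' | h'
    · exact absurd (h'.trans hDm.symm) hCD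
    · rw [hDm]; exact h'
  · push_neg at hDr
    by_cases hCr : ∃ j, j < n ∧ C = A' j
    · obtain ⟨j, hj, hCj⟩ := hCr
      rcases hDgood j hj with h' | h'
      · exact absurd (hCj.trans h'.symm) hCD
      · rw [hCj, Set.union_comm]; exact h'
    · push_neg at hCr
      have hC0 : C ∪ A' 0 ∈ P := (hCgood 0 hnpos).resolve_left (hCr 0 hnpos)
      have hD0 : D ∪ A' 0 ∈ P := (hDgood 0 hnpos).resolve_left (hDr 0 hnpos)
      exact hub hP (hA'ne 0) hCcoh.1.2.1 hDcoh.1.2.1 (hA'ne 1)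
        (cohort_disjoint hCcoh (hA'coh 0) (hCr 0 hnpos))
        (cohort_disjoint hDcoh (hA'coh 0) (hDr 0 hnpos))
        (hd' 1 0 (by omega) hnpos (by omega))
        hdisCD
        (cohort_disjoint hCcoh (hA'coh 1) (hCr 1 (by omega)))
        (cohort_disjoint hDcoh (hA'coh 1) (hDr 1 (by omega)))
        (by rw [Set.union_comm]; exact hC0)
        (by rw [Set.union_comm]; exact hD0)
        (hAll 0 1 hnpos (by omega) (by omega))
end

section
/- Let P be a (not necessarily finite) patchwork on a set Ω. Then there exists a linear order on Ω under which every member of P is convex if and only if no three nonempty members of P are pairwise adjacent. -/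
/-- No three nonempty members of `P` are pairwise adjacent. -/
def NoThreePairwiseAdjacent {Ω : Type*} (P : Set (Set Ω)) : Prop :=
  ¬ ∃ A B C : Set Ω, A ∈ P ∧ B ∈ P ∧ C ∈ P ∧
    A.Nonempty ∧ B.Nonempty ∧ C.Nonempty ∧ A ≠ B ∧ A ≠ C ∧ B ≠ C ∧
    Adjacent P A B ∧ Adjacent P A C ∧ Adjacent P B C

/-!
A compatible order rules out three pairwise adjacent members: the middle one of three points taken
from them would lie in the convex union of the other two members.

Conversely, the condition passes to traces of `P` on subsets, because three cyclically crossing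
members of `P` produce three pairwise adjacent ones. Compatibility of an order is a condition on
triples of points, so an ultrafilter limit of compatible orders of the finite traces is compatible,
and it suffices to treat a finite `Ω`, by induction on its size. If no proper member has two
points, any order works. Otherwise the complement of a maximal proper member `M` with two points
overlaps no member. If `M` overlaps no member, or `Mᶜ` is a member with two points, that set is
collapsed to a point, the quotient and the set are ordered, and the order of the set is substituted
for the point. In the remaining case `Mᶜ = {q}`: the smallest member `N` containing `q` and another
point lies in every such member; as `N \ {q}` and `{q}ᶜ \ N` are members, `N \ {q}` is an end
segment of any compatible order of `{q}ᶜ`, and `q` is placed next to it.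
-/

open Set

section

variable {Ω : Type*} {P : Set (Set Ω)} {A B : Set Ω}

theorem IsPatchwork.inter_mem (hP : IsPatchwork P) (hA : A ∈ P) (hB : B ∈ P) : A ∩ B ∈ P := by
  by_cases hAB : A ⊆ B
  · rwa [inter_eq_left.2 hAB]
  by_cases hBA : B ⊆ A
  · rwa [inter_eq_right.2 hBA]
  obtain h | h := (A ∩ B).eq_empty_or_nonempty
  · exact h ▸ hP.1
  · exact (hP.2.2 A hA B hB ⟨h, hAB, hBA⟩).1

theorem IsPatchwork.union_mem (hP : IsPatchwork P) (hA : A ∈ P) (hB : B ∈ P)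
    (h : (A ∩ B).Nonempty) : A ∪ B ∈ P := by
  by_cases hAB : A ⊆ B
  · rwa [union_eq_right.2 hAB]
  by_cases hBA : B ⊆ A
  · rwa [union_eq_left.2 hBA]
  exact (hP.2.2 A hA B hB ⟨h, hAB, hBA⟩).2.1

theorem IsPatchwork.diff_mem (hP : IsPatchwork P) (hA : A ∈ P) (hB : B ∈ P) (hBA : ¬B ⊆ A) :
    A \ B ∈ P := by
  by_cases hAB : A ⊆ B
  · exact sdiff_eq_empty.2 hAB ▸ hP.1
  by_cases h : Disjoint A B
  · rwa [sdiff_eq_left.2 h]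
  · exact (hP.2.2 A hA B hB ⟨not_disjoint_iff_nonempty_inter.1 h, hAB, hBA⟩).2.2

theorem IsPatchwork.union_eq_univ_of_maximal (hP : IsPatchwork P) {M D : Set Ω}
    (hM : Maximal (fun A => A ∈ P ∧ A ≠ univ) M) (hD : D ∈ P) (hMD : (M ∩ D).Nonempty)
    (hDM : ¬D ⊆ M) : M ∪ D = univ := by
  by_contra h
  exact hDM (subset_union_right.trans (hM.2 ⟨hP.union_mem hM.1.1 hD hMD, h⟩ subset_union_left))

theorem NoThreePairwiseAdjacent.false_of_disjoint (hN : NoThreePairwiseAdjacent P)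
    {X Y Z : Set Ω} (hX : X ∈ P) (hY : Y ∈ P) (hZ : Z ∈ P)
    (hXn : X.Nonempty) (hYn : Y.Nonempty) (hZn : Z.Nonempty)
    (hXY : Disjoint X Y) (hXZ : Disjoint X Z) (hYZ : Disjoint Y Z)
    (uXY : X ∪ Y ∈ P) (uXZ : X ∪ Z ∈ P) (uYZ : Y ∪ Z ∈ P) : False :=
  have ne {U V : Set Ω} (hU : U.Nonempty) (h : Disjoint U V) : U ≠ V :=
    fun e => hU.ne_empty (disjoint_self.1 (e ▸ h))
  hN ⟨X, Y, Z, hX, hY, hZ, hXn, hYn, hZn, ne hXn hXY, ne hXn hXZ, ne hYn hYZ,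
    ⟨hXY, uXY⟩, ⟨hXZ, uXZ⟩, ⟨hYZ, uYZ⟩⟩

theorem NoThreePairwiseAdjacent.false_of_crossing (hP : IsPatchwork P)
    (hN : NoThreePairwiseAdjacent P) {D₁ D₂ D₃ : Set Ω} (h₁ : D₁ ∈ P) (h₂ : D₂ ∈ P) (h₃ : D₃ ∈ P)
    {a b c : Ω} (ha₁ : a ∈ D₁) (ha₂ : a ∈ D₂) (ha₃ : a ∉ D₃)
    (hb₁ : b ∈ D₁) (hb₂ : b ∉ D₂) (hb₃ : b ∈ D₃)
    (hc₁ : c ∉ D₁) (hc₂ : c ∈ D₂) (hc₃ : c ∈ D₃) : False := by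
  -- The triangle is `V ∩ D₁ ∋ a`, `D₁ ∩ D₃ ∋ b`, `V \ D₁ ∋ c`,
  -- where `V := (D₂ ∩ (D₁ ∪ D₃)) \ (D₁ ∩ D₃)`.
  have hE : D₁ ∩ D₃ ∈ P := hP.inter_mem h₁ h₃
  have hV : (D₂ ∩ (D₁ ∪ D₃)) \ (D₁ ∩ D₃) ∈ P :=
    hP.diff_mem (hP.inter_mem h₂ (hP.union_mem h₁ h₃ ⟨b, hb₁, hb₃⟩)) hE
      fun h => hb₂ (h ⟨hb₁, hb₃⟩).1
  set V := (D₂ ∩ (D₁ ∪ D₃)) \ (D₁ ∩ D₃) with hV_def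
  have haV : a ∈ V := ⟨⟨ha₂, .inl ha₁⟩, fun h => ha₃ h.2⟩
  have hcV : c ∈ V := ⟨⟨hc₂, .inr hc₃⟩, fun h => hc₁ h.1⟩
  have hVE : Disjoint V (D₁ ∩ D₃) := disjoint_sdiff_left
  refine hN.false_of_disjoint (hP.inter_mem hV h₁) hE (hP.diff_mem hV h₁ fun h => hb₂ (h hb₁).1.1)
    ⟨a, haV, ha₁⟩ ⟨b, hb₁, hb₃⟩ ⟨c, hcV, hc₁⟩ (hVE.mono_left inter_subset_left)
    disjoint_sdiff_inter.symm (hVE.mono_left sdiff_subset).symm ?_ (by rwa [inter_union_sdiff]) ?_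
  · convert hP.inter_mem h₁ (hP.union_mem hV h₃ ⟨c, hcV, hc₃⟩) using 1
    ext x; simp only [hV_def, mem_union, mem_inter_iff, mem_sdiff]; tauto
  · convert hP.inter_mem h₃ (hP.union_mem hV h₁ ⟨a, haV, ha₁⟩) using 1
    ext x; simp only [hV_def, mem_union, mem_inter_iff, mem_sdiff]; tauto

def trace (P : Set (Set Ω)) (S : Set Ω) : Set (Set S) :=
  preimage Subtype.val '' P

theorem IsPatchwork.trace (hP : IsPatchwork P) (S : Set Ω) : IsPatchwork (trace P S) := by
  refine ⟨⟨∅, hP.1, rfl⟩, ⟨univ, hP.2.1, rfl⟩, ?_⟩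
  rintro _ ⟨A, hA, rfl⟩ _ ⟨B, hB, rfl⟩ ⟨⟨s, hs⟩, -, hBA⟩
  exact ⟨⟨_, hP.inter_mem hA hB, rfl⟩, ⟨_, hP.union_mem hA hB ⟨s, hs⟩, rfl⟩,
    ⟨_, hP.diff_mem hA hB fun h => hBA (preimage_mono h), rfl⟩⟩

theorem NoThreePairwiseAdjacent.trace (hP : IsPatchwork P) (hN : NoThreePairwiseAdjacent P)
    (S : Set Ω) : NoThreePairwiseAdjacent (trace P S) := by
  rintro ⟨X, Y, Z, -, -, -, ⟨x, hx⟩, ⟨y, hy⟩, ⟨z, hz⟩, -, -, -,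
    ⟨hXY, D₁, h₁, hD₁⟩, ⟨hXZ, D₂, h₂, hD₂⟩, ⟨hYZ, D₃, h₃, hD₃⟩⟩
  have mem {D : Set Ω} {U : Set S} (hD : Subtype.val ⁻¹' D = U) (s : S) : (s : Ω) ∈ D ↔ s ∈ U :=
    hD ▸ Iff.rfl
  refine hN.false_of_crossing hP h₁ h₂ h₃ (a := x) (b := y) (c := z) ?_ ?_ ?_ ?_ ?_ ?_ ?_ ?_ ?_ <;>
    simp only [mem hD₁, mem hD₂, mem hD₃, mem_union, hx, hy, hz, true_or, or_true,
      hXY.notMem_of_mem_left hx, hXZ.notMem_of_mem_left hx, hXY.notMem_of_mem_right hy,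
      hYZ.notMem_of_mem_left hy, hXZ.notMem_of_mem_right hz, hYZ.notMem_of_mem_right hz,
      or_self, not_false_eq_true]

def ConvexOrderable (P : Set (Set Ω)) : Prop :=
  ∃ L : LinearOrder Ω, ∀ A ∈ P, IsConvex L.le A

theorem ConvexOrderable.noThreePairwiseAdjacent (h : ConvexOrderable P) :
    NoThreePairwiseAdjacent P := by
  obtain ⟨L, hL⟩ := h
  let _ := L
  rintro ⟨A, B, C, -, -, -, ⟨a, ha⟩, ⟨b, hb⟩, ⟨c, hc⟩, -, -, -,
    ⟨hAB, uAB⟩, ⟨hAC, uAC⟩, ⟨hBC, uBC⟩⟩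
  have between {X Y Z : Set Ω} {x y z : Ω} (hx : x ∈ X) (hy : y ∈ Y) (hz : z ∈ Z)
      (hXY : Disjoint X Y) (hYZ : Disjoint Y Z) (hXZ : X ∪ Z ∈ P) (hxy : x ≤ y) (hyz : y ≤ z) :
      False :=
    (hL _ hXZ x y z hxy hyz (.inl hx) (.inr hz)).elim
      (hXY.notMem_of_mem_right hy) (hYZ.notMem_of_mem_left hy)
  rcases le_total a b with hab | hba
  · rcases le_total b c with hbc | hcb
    · exact between ha hb hc hAB hBC uAC hab hbc
    rcases le_total a c with hac | hca
    · exact between ha hc hb hAC hBC.symm uAB hac hcb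
    · exact between hc ha hb hAC.symm hAB (union_comm B C ▸ uBC) hca hab
  · rcases le_total c b with hcb | hbc
    · exact between hc hb ha hBC.symm hAB.symm (union_comm A C ▸ uAC) hcb hba
    rcases le_total a c with hac | hca
    · exact between hb ha hc hAB.symm hAC uBC hba hac
    · exact between hb hc ha hBC hAC.symm (union_comm A B ▸ uAB) hbc hca

theorem isConvex_flip {le : Ω → Ω → Prop} {A : Set Ω} (h : IsConvex le A) :
    IsConvex (flip le) A :=
  fun p q r hpq hqr hp hr => h r q p hqr hpq hr hp

theorem isUpperSet_or_isLowerSet_of_isConvex [LinearOrder Ω] {R : Set Ω}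
    (hR : IsConvex (· ≤ ·) R) (hRc : IsConvex (· ≤ ·) Rᶜ) : IsUpperSet R ∨ IsLowerSet R := by
  simp only [IsUpperSet, IsLowerSet, or_iff_not_imp_left, not_forall]
  rintro ⟨x, y, hxy, hx, hy⟩ x' y' hyx' hx'
  by_contra hy'
  rcases le_total y' x with h | h
  · exact hRc y' x y h hxy hy' hy hx
  · exact hy' (hR x y' x' h hyx' hx hx')

theorem convexOrderable_of_subsingleton (h : ∀ A ∈ P, A ≠ univ → A.Subsingleton) :
    ConvexOrderable P := by
  let _ := IsWellOrder.linearOrder (@WellOrderingRel Ω)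
  refine ⟨inferInstance, fun A hA p q r hpq hqr hp hr => ?_⟩
  by_cases hU : A = univ
  · exact hU ▸ trivial
  · obtain rfl := h A hA hU hp hr
    exact le_antisymm hpq hqr ▸ hp

theorem exists_linearOrder_substitution {A : Set Ω} {a : Ω} (ha : a ∈ A)
    (L₁ : LinearOrder (insert a Aᶜ : Set Ω)) (L₂ : LinearOrder A) :
    ∃ L : LinearOrder Ω,
      (∀ B ⊆ A, IsConvex L₂.le (Subtype.val ⁻¹' B) → IsConvex L.le B) ∧
      (∀ B, A ⊆ B ∨ Disjoint A B → IsConvex L₁.le (Subtype.val ⁻¹' B) → IsConvex L.le B) := by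
  classical
  let _ := L₁
  let _ := L₂
  let a' : (insert a Aᶜ : Set Ω) := ⟨a, mem_insert a _⟩
  -- `A` is collapsed to `a`, and the order of `A` is substituted for it.
  let f : Ω → (insert a Aᶜ : Set Ω) ×ₗ A := fun x =>
    if hx : x ∈ A then toLex (a', ⟨x, hx⟩) else toLex (⟨x, mem_insert_of_mem a hx⟩, ⟨a, ha⟩)
  have f_inj : Function.Injective f := by
    refine Function.LeftInverse.injective (g := fun z => if ((ofLex z).1 : Ω) = a then
      ((ofLex z).2 : Ω) else (ofLex z).1) fun x => ?_
    unfold f a'; split_ifs <;> simp_all [eq_comm]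
  have f_fst (x : Ω) : ((ofLex (f x)).1 : Ω) = if x ∈ A then a else x := by
    unfold f; split_ifs <;> rfl
  have f_snd {x : Ω} (hx : x ∈ A) : (ofLex (f x)).2 = ⟨x, hx⟩ := by simp [f, hx]
  refine ⟨LinearOrder.lift' f f_inj, fun B hBA hB p q r hpq hqr hp hr => ?_,
    fun B hAB hB p q r hpq hqr hp hr => ?_⟩
  · change f p ≤ f q at hpq
    change f q ≤ f r at hqr
    have hpr : (ofLex (f p)).1 = (ofLex (f r)).1 :=
      Subtype.ext (by simp only [f_fst, hBA hp, hBA hr, if_true])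
    have hfst : (ofLex (f q)).1 = (ofLex (f p)).1 :=
      le_antisymm (hpr ▸ Prod.Lex.monotone_fst _ _ hqr) (Prod.Lex.monotone_fst _ _ hpq)
    have hqA : q ∈ A := by
      by_contra hqA
      have := congrArg Subtype.val hfst
      simp only [f_fst, hqA, hBA hp, if_true, if_false] at this
      exact hqA (this ▸ ha)
    have snd_le {x y : Ω} (h : f x ≤ f y) (he : (ofLex (f x)).1 = (ofLex (f y)).1) :
        (ofLex (f x)).2 ≤ (ofLex (f y)).2 :=
      (Prod.Lex.toLex_le_toLex' (x := ofLex (f x)) (y := ofLex (f y))).1 h |>.2 he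
    refine hB ⟨p, hBA hp⟩ ⟨q, hqA⟩ ⟨r, hBA hr⟩ ?_ ?_ hp hr
    · simpa only [f_snd (hBA hp), f_snd hqA] using snd_le hpq hfst.symm
    · simpa only [f_snd (hBA hr), f_snd hqA] using snd_le hqr (hfst.trans hpr)
  · have mem_iff (x : Ω) : x ∈ B ↔ ((ofLex (f x)).1 : Ω) ∈ B := by
      rw [f_fst]
      split_ifs with hx
      · exact hAB.elim (fun h => iff_of_true (h hx) (h ha))
          fun h => iff_of_false (h.notMem_of_mem_left hx) (h.notMem_of_mem_left ha)
      · rfl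
    exact (mem_iff q).2 <| hB _ _ _ (Prod.Lex.monotone_fst _ _ hpq)
      (Prod.Lex.monotone_fst _ _ hqr) ((mem_iff p).1 hp) ((mem_iff r).1 hr)

theorem convexOrderable_of_forall_not_overlap {A : Set Ω} (hA : ∀ B ∈ P, ¬Overlap A B) {a : Ω}
    (ha : a ∈ A) (h₁ : ConvexOrderable (trace P (insert a Aᶜ)))
    (h₂ : ConvexOrderable (trace P A)) : ConvexOrderable P := by
  obtain ⟨L₁, hL₁⟩ := h₁
  obtain ⟨L₂, hL₂⟩ := h₂
  obtain ⟨L, hL_in, hL_out⟩ := exists_linearOrder_substitution ha L₁ L₂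
  refine ⟨L, fun B hB => ?_⟩
  by_cases hBA : B ⊆ A
  · exact hL_in B hBA (hL₂ _ ⟨B, hB, rfl⟩)
  · refine hL_out B ?_ (hL₁ _ ⟨B, hB, rfl⟩)
    by_contra! h
    exact hA B hB ⟨not_disjoint_iff_nonempty_inter.1 h.2, h.1, hBA⟩

theorem exists_least_nontrivial_mem_of_compl_singleton_mem [Finite Ω] [Nontrivial Ω]
    (hP : IsPatchwork P) (hN : NoThreePairwiseAdjacent P) {q : Ω} (hq : {q}ᶜ ∈ P) :
    ∃ N ∈ P, q ∈ N ∧ N.Nontrivial ∧ ∀ B ∈ P, q ∈ B → B.Nontrivial → N ⊆ B := by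
  obtain ⟨N, ⟨hNP, hqN, hNnt⟩, hmin⟩ :=
    (toFinite {B | B ∈ P ∧ q ∈ B ∧ B.Nontrivial}).exists_minimal
      ⟨univ, hP.2.1, mem_univ q, nontrivial_univ⟩
  refine ⟨N, hNP, hqN, hNnt, fun B hB hqB hBnt => ?_⟩
  by_cases hNB : (N ∩ B).Nontrivial
  · exact (hmin ⟨hP.inter_mem hNP hB, ⟨hqN, hqB⟩, hNB⟩ inter_subset_left).trans inter_subset_right
  have hNB' : N ∩ B = {q} := (not_nontrivial_iff.1 hNB).eq_singleton_of_mem ⟨hqN, hqB⟩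
  -- otherwise `{q}`, `N \ {q}` and `B \ {q}` are pairwise adjacent
  have diff_mem {D : Set Ω} (hD : D ∈ P) : D \ {q} ∈ P := sdiff_eq D {q} ▸ hP.inter_mem hD hq
  have insert_diff {D : Set Ω} (hqD : q ∈ D) : {q} ∪ D \ {q} = D := by
    rw [singleton_union, insert_sdiff_singleton, insert_eq_of_mem hqD]
  have ne_q {D : Set Ω} (hD : D.Nontrivial) : (D \ {q}).Nonempty := hD.exists_ne q
  exfalso
  refine hN.false_of_disjoint (hNB' ▸ hP.inter_mem hNP hB) (diff_mem hNP) (diff_mem hB)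
    (singleton_nonempty q) (ne_q hNnt) (ne_q hBnt) disjoint_sdiff_right disjoint_sdiff_right
    (disjoint_left.2 fun x hxN hxB => hxN.2 (hNB' ▸ ⟨hxN.1, hxB.1⟩))
    (by rwa [insert_diff hqN]) (by rwa [insert_diff hqB])
    (union_sdiff_distrib ▸ diff_mem (hP.union_mem hNP hB ⟨q, hqN, hqB⟩))

theorem convexOrderable_of_upperSet_of_compl_singleton {q : Ω} {N : Set Ω}
    (L : LinearOrder ({q}ᶜ : Set Ω))
    (hL : ∀ B ∈ P, IsConvex L.le (Subtype.val ⁻¹' B))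
    (hup : ∀ x y : ({q}ᶜ : Set Ω), L.le x y → (x : Ω) ∈ N → (y : Ω) ∈ N)
    (hNq : (N \ {q}).Nonempty) (hNsub : ∀ B ∈ P, q ∈ B → B.Nontrivial → N ⊆ B) :
    ConvexOrderable P := by
  classical
  let _ := L
  -- `q` is put on top, next to the upper end segment `N \ {q}`
  let f : Ω → WithTop ({q}ᶜ : Set Ω) := fun x =>
    if hx : x = q then ⊤ else ↑(⟨x, hx⟩ : ({q}ᶜ : Set Ω))
  have f_q : f q = ⊤ := dif_pos rfl
  have f_ne {x : Ω} (hx : x ≠ q) : f x = ↑(⟨x, hx⟩ : ({q}ᶜ : Set Ω)) := dif_neg hx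
  have f_inj : Function.Injective f := by
    intro x y h
    by_cases hx : x = q <;> by_cases hy : y = q
    · exact hx.trans hy.symm
    · simp [f_q, f_ne, hx, hy] at h
    · simp [f_q, f_ne, hx, hy] at h
    · simpa [f_ne, hx, hy, Subtype.ext_iff] using h
  refine ⟨LinearOrder.lift' f f_inj, fun B hB p y r hpy hyr hp hr => ?_⟩
  change f p ≤ f y at hpy
  change f y ≤ f r at hyr
  by_cases hyq : y = q
  · have hrq : r = q := f_inj (top_le_iff.1 (f_q ▸ hyq ▸ hyr) |>.trans f_q.symm)
    exact hyq ▸ hrq ▸ hr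
  have hpq : p ≠ q := fun h => hyq (f_inj (top_le_iff.1 (f_q ▸ h ▸ hpy) |>.trans f_q.symm))
  rw [f_ne hpq, f_ne hyq, WithTop.coe_le_coe] at hpy
  by_cases hrq : r = q
  · obtain ⟨n, hnN, hnq⟩ := hNq
    have hNB := hNsub B hB (hrq ▸ hr) ⟨p, hp, q, hrq ▸ hr, hpq⟩
    rcases le_total (⟨n, hnq⟩ : ({q}ᶜ : Set Ω)) ⟨y, hyq⟩ with hny | hyn
    · exact hNB (hup _ _ hny hnN)
    · exact hL B hB _ ⟨y, hyq⟩ ⟨n, hnq⟩ hpy hyn hp (hNB hnN)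
  · rw [f_ne hyq, f_ne hrq, WithTop.coe_le_coe] at hyr
    exact hL B hB _ ⟨y, hyq⟩ ⟨r, hrq⟩ hpy hyr hp hr

theorem convexOrderable_of_compl_singleton_mem [Finite Ω] [Nontrivial Ω] (hP : IsPatchwork P)
    (hN : NoThreePairwiseAdjacent P) {q : Ω} (hq : {q}ᶜ ∈ P)
    (h : ConvexOrderable (trace P {q}ᶜ)) : ConvexOrderable P := by
  obtain ⟨N, hNP, hqN, hNnt, hNsub⟩ := exists_least_nontrivial_mem_of_compl_singleton_mem hP hN hq
  obtain ⟨L, hL⟩ := h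
  replace hL : ∀ B ∈ P, IsConvex L.le (Subtype.val ⁻¹' B) := fun B hB => hL _ ⟨B, hB, rfl⟩
  have hNc : IsConvex L.le (Subtype.val ⁻¹' N)ᶜ := by
    convert hL _ (hP.diff_mem hq hNP fun h => h hqN rfl) using 1
    ext x; simp
  let _ := L
  rcases isUpperSet_or_isLowerSet_of_isConvex (hL N hNP) hNc with hup | hlow
  · exact convexOrderable_of_upperSet_of_compl_singleton L hL (fun _ _ => @hup _ _)
      (hNnt.exists_ne q) hNsub
  · exact convexOrderable_of_upperSet_of_compl_singleton
      (show LinearOrder ({q}ᶜ : Set Ω)ᵒᵈ from inferInstance) (fun B hB => isConvex_flip (hL B hB))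
      (fun _ _ => @hlow _ _) (hNnt.exists_ne q) hNsub

theorem convexOrderable_of_forall_ne_univ [Finite Ω] (hP : IsPatchwork P)
    (hN : NoThreePairwiseAdjacent P) (ih : ∀ S : Set Ω, S ≠ univ → ConvexOrderable (trace P S)) :
    ConvexOrderable P := by
  by_cases hsub : ∀ A ∈ P, A ≠ univ → A.Subsingleton
  · exact convexOrderable_of_subsingleton hsub
  push Not at hsub
  obtain ⟨A₀, hA₀, hA₀U, hA₀nt⟩ := hsub
  obtain ⟨M, hA₀M, hM⟩ := (toFinite {A | A ∈ P ∧ A ≠ univ}).exists_le_maximal ⟨hA₀, hA₀U⟩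
  have hMnt : M.Nontrivial := hA₀nt.mono hA₀M
  have block {A : Set Ω} (hA : ∀ B ∈ P, ¬Overlap A B) (hAnt : A.Nontrivial) (hAU : A ≠ univ) :
      ConvexOrderable P := by
    obtain ⟨a, ha, b, hb, hab⟩ := hAnt
    refine convexOrderable_of_forall_not_overlap hA ha (ih _ fun h => ?_) (ih A hAU)
    exact (h ▸ mem_univ b : b ∈ insert a Aᶜ).elim (hab ·.symm) (· hb)
  by_cases hMaut : ∀ B ∈ P, ¬Overlap M B
  · exact block hMaut hMnt hM.1.2
  push Not at hMaut
  obtain ⟨B, hB, hMB, hMB', hBM⟩ := hMaut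
  have hMc : Mᶜ ∈ P := by
    have := hP.diff_mem hB hM.1.1 hMB'
    rwa [← union_sdiff_left, hP.union_eq_univ_of_maximal hM hB hMB hBM, ← compl_eq_univ_sdiff]
      at this
  have hMc_aut : ∀ D ∈ P, ¬Overlap Mᶜ D := by
    rintro D hD ⟨⟨x, hxM, hxD⟩, hMcD, hDMc⟩
    obtain ⟨y, hyD, hyM⟩ := not_subset.1 hDMc
    have hMD := hP.union_eq_univ_of_maximal hM hD ⟨y, not_not.1 hyM, hyD⟩ fun h => hxM (h hxD)
    exact hMcD fun z hz => (hMD ▸ mem_univ z).resolve_left hz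
  rcases (Mᶜ).subsingleton_or_nontrivial with hs | hnt
  · obtain ⟨q, hq⟩ := nonempty_compl.2 hM.1.2
    have hMq : M = {q}ᶜ := by rw [← hs.eq_singleton_of_mem hq, compl_compl]
    have := nontrivial_of_nontrivial hMnt
    exact convexOrderable_of_compl_singleton_mem hP hN (hMq ▸ hM.1.1) (ih _ (hMq ▸ hM.1.2))
  · exact block hMc_aut hnt (compl_ne_univ.2 hMnt.nonempty)

theorem NoThreePairwiseAdjacent.convexOrderable_of_finite [Finite Ω] (hP : IsPatchwork P)
    (hN : NoThreePairwiseAdjacent P) : ConvexOrderable P := by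
  induction h : Nat.card Ω using Nat.strong_induction_on generalizing Ω with
  | _ n ih =>
  refine convexOrderable_of_forall_ne_univ hP hN fun S hS =>
    ih _ ?_ (hP.trace S) (hN.trace hP S) rfl
  rw [← h, Nat.card_coe_set_eq, ← ncard_univ]
  exact ncard_lt_ncard (ssubset_univ_iff.2 hS)

theorem convexOrderable_of_forall_finset (h : ∀ T : Finset Ω, ConvexOrderable (trace P T)) :
    ConvexOrderable P := by
  choose L hL using h
  let U : Ultrafilter (Finset Ω) := .of Filter.atTop
  have mem (x : Ω) : ∀ᶠ T in (U : Filter (Finset Ω)), x ∈ T :=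
    Filter.Eventually.mono (Ultrafilter.of_le _ (Filter.eventually_ge_atTop {x}))
      fun _ h => h (Finset.mem_singleton_self x)
  let R (x y : Ω) : Prop :=
    ∀ᶠ T in (U : Filter (Finset Ω)), ∀ (hx : x ∈ T) (hy : y ∈ T), (L T).le ⟨x, hx⟩ ⟨y, hy⟩
  have le_total (x y : Ω) : R x y ∨ R y x := by
    refine Ultrafilter.eventually_or.1 (((mem x).and (mem y)).mono fun T ⟨hx, hy⟩ => ?_)
    exact ((L T).le_total ⟨x, hx⟩ ⟨y, hy⟩).imp (fun h _ _ => h) (fun h _ _ => h)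
  have le_trans (x y z : Ω) (hxy : R x y) (hyz : R y z) : R x z := by
    filter_upwards [hxy, hyz, mem y] with T hxy hyz hy hx hz
    exact (L T).le_trans _ _ _ (hxy hx hy) (hyz hy hz)
  have le_antisymm (x y : Ω) (hxy : R x y) (hyx : R y x) : x = y := by
    obtain ⟨T, hxy, hyx, hx, hy⟩ := (hxy.and (hyx.and ((mem x).and (mem y)))).exists
    exact congrArg Subtype.val ((L T).le_antisymm _ _ (hxy hx hy) (hyx hy hx))
  have le_refl (x : Ω) : R x x := .of_forall fun T _ _ => (L T).le_refl _
  refine ⟨{ le := R, le_refl, le_trans, le_antisymm, le_total,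
             toDecidableLE := Classical.decRel R },
    fun A hA p q r hpq hqr hp hr => ?_⟩
  obtain ⟨T, hpq, hqr, hpT, hqT, hrT⟩ :=
    (hpq.and (hqr.and ((mem p).and ((mem q).and (mem r))))).exists
  exact hL T _ ⟨A, hA, rfl⟩ ⟨p, hpT⟩ ⟨q, hqT⟩ ⟨r, hrT⟩ (hpq hpT hqT) (hqr hqT hrT) hp hr

end

theorem statement14 {Ω : Type*} (P : Set (Set Ω)) (hP : IsPatchwork P) :
    (∃ L : LinearOrder Ω, ∀ A ∈ P, IsConvex L.le A) ↔ NoThreePairwiseAdjacent P :=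
  ⟨ConvexOrderable.noThreePairwiseAdjacent, fun hN => convexOrderable_of_forall_finset fun T =>
    (hN.trace hP T).convexOrderable_of_finite (hP.trace T)⟩
end

section
/- Let n be a nonnegative integer, Ω a set, and C a set of at most n subsets of Ω. Then the smallest patchwork on Ω containing C has at most 2^(2^n − 1) + 1 elements. -/
theorem statement15 {Ω : Type*} (n : ℕ) (C : Set (Set Ω)) (hC : C.encard ≤ (n : ℕ∞)) :
    (patchworkClosure C).encard ≤ ((2 ^ (2 ^ n - 1) + 1 : ℕ) : ℕ∞) := by
  classical
  obtain ⟨hCfin, hCcard⟩ := Set.encard_le_coe_iff_finite_ncard_le.mp hC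
  haveI : Finite ↥C := hCfin.to_subtype
  -- the membership pattern of a point
  set pat : Ω → Set ↥C := fun x => {S : ↥C | x ∈ (S : Set Ω)} with hpat
  -- saturated subsets of ⋃₀ C
  set Q : Set (Set Ω) :=
    {A : Set Ω | A ⊆ ⋃₀ C ∧ ∀ x y : Ω, pat x = pat y → (x ∈ A ↔ y ∈ A)} with hQ
  set P : Set (Set Ω) := insert Set.univ Q with hP
  -- P is a patchwork containing C
  have hQclosed : ∀ A ∈ Q, ∀ B ∈ Q, (A ∩ B ∈ Q ∧ A ∪ B ∈ Q ∧ A \ B ∈ Q) := by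
    rintro A ⟨hA1, hA2⟩ B ⟨hB1, hB2⟩
    refine ⟨⟨fun x hx => hA1 hx.1, ?_⟩, ⟨?_, ?_⟩, ⟨fun x hx => hA1 hx.1, ?_⟩⟩
    · intro x y h
      simp only [Set.mem_inter_iff, hA2 x y h, hB2 x y h]
    · exact Set.union_subset hA1 hB1
    · intro x y h
      simp only [Set.mem_union, hA2 x y h, hB2 x y h]
    · intro x y h
      simp only [Set.mem_diff, hA2 x y h, hB2 x y h]
  have hPpatch : IsPatchwork P := by
    refine ⟨Or.inr ⟨Set.empty_subset _, fun x y _ => Iff.rfl⟩, Or.inl rfl, ?_⟩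
    rintro A hA B hB hOv
    rcases hA with rfl | hA
    · exact absurd (Set.subset_univ B) hOv.2.2
    rcases hB with rfl | hB
    · exact absurd (Set.subset_univ A) hOv.2.1
    obtain ⟨h1, h2, h3⟩ := hQclosed A hA B hB
    exact ⟨Or.inr h1, Or.inr h2, Or.inr h3⟩
  have hCP : C ⊆ P := by
    intro S hS
    refine Or.inr ⟨Set.subset_sUnion_of_mem hS, ?_⟩
    intro x y h
    have := Set.ext_iff.mp h ⟨S, hS⟩
    simpa [hpat] using this
  have hsub : patchworkClosure C ⊆ P := Set.sInter_subset_of_mem ⟨hPpatch, hCP⟩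
  -- the nonempty patterns
  set F : Set (Set ↥C) := {p : Set ↥C | p.Nonempty} with hF
  -- injection from Q
  set Ψ : Set Ω → (↥F → Prop) := fun A p => ∃ x ∈ A, pat x = (p : Set ↥C) with hΨ
  have hinjOn : Set.InjOn Ψ Q := by
    rintro A ⟨hA1, hA2⟩ B ⟨hB1, hB2⟩ h
    have key : ∀ A' B' : Set Ω, A' ⊆ ⋃₀ C →
        (∀ x y : Ω, pat x = pat y → (x ∈ B' ↔ y ∈ B')) →
        Ψ A' = Ψ B' → A' ⊆ B' := by
      intro A' B' hA'1 hB'2 hAB x hx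
      obtain ⟨S, hS, hxS⟩ := hA'1 hx
      have hne : (pat x).Nonempty := ⟨⟨S, hS⟩, hxS⟩
      have hmem : Ψ A' ⟨pat x, hne⟩ := ⟨x, hx, rfl⟩
      rw [hAB] at hmem
      obtain ⟨y, hy, hyp⟩ := hmem
      exact (hB'2 x y hyp.symm).mpr hy
    exact Set.Subset.antisymm (key A B hA1 hB2 h) (key B A hB1 hA2 h.symm)
  -- finiteness and counting
  haveI : Finite (↥F → Prop) := by infer_instance
  have hQfinite : Finite ↥Q := by
    refine Finite.of_injective (fun A : ↥Q => Ψ (A : Set Ω)) ?_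
    intro a b hab
    exact Subtype.ext (hinjOn a.2 b.2 hab)
  have hQfin : Q.Finite := Set.finite_coe_iff.mp hQfinite
  have hPfin : P.Finite := hQfin.insert _
  -- Nat.card F ≤ 2 ^ n - 1
  have hFcard : Nat.card ↥F ≤ 2 ^ n - 1 := by
    have hFeq : F = ({(∅ : Set ↥C)}ᶜ : Set (Set ↥C)) := by
      ext p
      simp [hF, Set.nonempty_iff_ne_empty]
    have h1 : F.ncard + ({(∅ : Set ↥C)} : Set (Set ↥C)).ncard = Nat.card (Set ↥C) := by
      rw [hFeq]
      rw [← Set.ncard_add_ncard_compl ({(∅ : Set ↥C)} : Set (Set ↥C))]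
      ring
    have h2 : Nat.card (Set ↥C) = 2 ^ Nat.card ↥C := by
      rw [show (Set ↥C) = (↥C → Prop) from rfl, Nat.card_fun]
      congr 1
      rw [Nat.card_eq_fintype_card, Fintype.card_prop]
    have h3 : Nat.card ↥C ≤ n := by
      rw [Nat.card_coe_set_eq]; exact hCcard
    have h4 : Nat.card ↥F = F.ncard := Nat.card_coe_set_eq F
    have h0 : ({(∅ : Set ↥C)} : Set (Set ↥C)).ncard = 1 := Set.ncard_singleton _
    have h5 : F.ncard = 2 ^ Nat.card ↥C - 1 := by
      omega
    rw [h4, h5]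
    exact Nat.sub_le_sub_right (Nat.pow_le_pow_right (by norm_num) h3) 1
  -- Q.ncard ≤ 2 ^ (2 ^ n - 1)
  have hQcard : Q.ncard ≤ 2 ^ (2 ^ n - 1) := by
    have h1 : Nat.card ↥Q ≤ Nat.card (↥F → Prop) :=
      Nat.card_le_card_of_injective (fun A : ↥Q => Ψ (A : Set Ω))
        (fun a b hab => Subtype.ext (hinjOn a.2 b.2 hab))
    have h2 : Nat.card (↥F → Prop) = 2 ^ Nat.card ↥F := by
      rw [Nat.card_fun]
      congr 1
      rw [Nat.card_eq_fintype_card, Fintype.card_prop]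
    rw [← Nat.card_coe_set_eq]
    calc Nat.card ↥Q ≤ 2 ^ Nat.card ↥F := by rw [← h2]; exact h1
      _ ≤ 2 ^ (2 ^ n - 1) := Nat.pow_le_pow_right (by norm_num) hFcard
  have hPcard : P.ncard ≤ 2 ^ (2 ^ n - 1) + 1 := by
    calc P.ncard ≤ Q.ncard + 1 := Set.ncard_insert_le _ _
      _ ≤ 2 ^ (2 ^ n - 1) + 1 := by omega
  calc (patchworkClosure C).encard ≤ P.encard := Set.encard_mono hsub
    _ ≤ ((2 ^ (2 ^ n - 1) + 1 : ℕ) : ℕ∞) :=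
        Set.encard_le_coe_iff_finite_ncard_le.mpr ⟨hPfin, hPcard⟩
end

section
/- For every nonnegative integer n with n ≠ 2, there exist a set Ω and a set C of n subsets of Ω such that the smallest patchwork on Ω containing C has exactly 2^(2^n − 1) + 1 elements. -/
/-!
Take `Ω = 𝒫 [n]` and `C = {A₁, …, Aₙ}` with `Aᵢ = {x | i ∈ x}`. The family of all `B ⊆ Ω` with
`∅ ∉ B`, together with `Ω`, is a patchwork containing `C`, and it has `2 ^ (2 ^ n - 1) + 1`
members; we show it is the closure of `C`.

In a patchwork `A ∩ B` is always a member, `A \ B` is one as soon as `B ⊈ A`, and `A ∪ B` as soon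
as `A ∩ B ≠ ∅`. Intersections of the `Aᵢ` give the up-sets `[z, Ω]`; for `z ≠ ∅`, removing from
`[z, Ω]` the sets `Aᵢ \ Aⱼ` with `i ≠ j ∉ z` leaves the pair `{z, Ω}`. For `x, y ≠ ∅, Ω` we get
`{x, y} = ({x, Ω} ∪ {y, Ω}) \ {w, Ω}` for a fourth nonempty `w`, which exists once `n ≥ 3`
(for `n ≤ 1` every nonempty set is `Ω`). Finally a nonempty `B ∌ ∅` is the union of the pairs
`{z, h}`, `z ∈ B`, which all contain a fixed `h ∈ B`.
-/

namespace IsPatchwork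

variable {Ω ι : Type*} {P : Set (Set Ω)} {A B : Set Ω}

lemma inter_mem_s16 (hP : IsPatchwork P) (hA : A ∈ P) (hB : B ∈ P) : A ∩ B ∈ P := by
  by_cases hAB : A ⊆ B
  · rwa [Set.inter_eq_left.mpr hAB]
  by_cases hBA : B ⊆ A
  · rwa [Set.inter_eq_right.mpr hBA]
  rcases (A ∩ B).eq_empty_or_nonempty with h | h
  · exact h ▸ hP.1
  · exact (hP.2.2 A hA B hB ⟨h, hAB, hBA⟩).1

lemma union_mem_s16 (hP : IsPatchwork P) (hA : A ∈ P) (hB : B ∈ P) (h : (A ∩ B).Nonempty) :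
    A ∪ B ∈ P := by
  by_cases hAB : A ⊆ B
  · rwa [Set.union_eq_right.mpr hAB]
  by_cases hBA : B ⊆ A
  · rwa [Set.union_eq_left.mpr hBA]
  exact (hP.2.2 A hA B hB ⟨h, hAB, hBA⟩).2.1

lemma diff_mem_s16 (hP : IsPatchwork P) (hA : A ∈ P) (hB : B ∈ P) (hBA : ¬ B ⊆ A) :
    A \ B ∈ P := by
  by_cases hAB : A ⊆ B
  · rw [Set.sdiff_eq_empty.mpr hAB]
    exact hP.1
  rcases (A ∩ B).eq_empty_or_nonempty with h | h
  · rwa [sdiff_eq_left.mpr (Set.disjoint_iff_inter_eq_empty.mpr h)]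
  · exact (hP.2.2 A hA B hB ⟨h, hAB, hBA⟩).2.2

lemma biInter_mem (hP : IsPatchwork P) {s : Finset ι} {Y : ι → Set Ω}
    (hY : ∀ k ∈ s, Y k ∈ P) : ⋂ k ∈ s, Y k ∈ P := by
  classical
  induction s using Finset.induction_on with
  | empty => simpa using hP.2.1
  | insert a s _ ih =>
    rw [Finset.set_biInter_insert]
    exact hP.inter_mem_s16 (hY a (s.mem_insert_self a))
      (ih fun k hk => hY k (Finset.mem_insert_of_mem hk))

lemma biUnion_mem (hP : IsPatchwork P) {s : Finset ι} {Y : ι → Set Ω} {p : Ω}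
    (hY : ∀ k ∈ s, Y k ∈ P) (hp : ∀ k ∈ s, p ∈ Y k) : ⋃ k ∈ s, Y k ∈ P := by
  classical
  induction s using Finset.induction_on with
  | empty => simpa using hP.1
  | insert a s _ ih =>
    rw [Finset.set_biUnion_insert]
    rcases s.eq_empty_or_nonempty with rfl | ⟨b, hb⟩
    · simpa using hY a (Finset.mem_insert_self a _)
    refine hP.union_mem_s16 (hY a (s.mem_insert_self a))
      (ih (fun k hk => hY k (Finset.mem_insert_of_mem hk))
        (fun k hk => hp k (Finset.mem_insert_of_mem hk))) ⟨p, hp a (s.mem_insert_self a), ?_⟩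
    exact Set.mem_biUnion hb (hp b (Finset.mem_insert_of_mem hb))

lemma diff_biUnion_mem (hP : IsPatchwork P) {X : Set Ω} (hX : X ∈ P) {s : Finset ι}
    {Y : ι → Set Ω} (hY : ∀ k ∈ s, Y k ∈ P) (hYX : ∀ k ∈ s, ¬ Y k ⊆ X) :
    X \ ⋃ k ∈ s, Y k ∈ P := by
  classical
  induction s using Finset.induction_on with
  | empty => simpa using hX
  | insert a s _ ih =>
    rw [Finset.set_biUnion_insert, Set.union_comm, ← Set.sdiff_sdiff]
    exact hP.diff_mem_s16 (ih (fun k hk => hY k (Finset.mem_insert_of_mem hk))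
        (fun k hk => hYX k (Finset.mem_insert_of_mem hk))) (hY a (s.mem_insert_self a))
      fun h => hYX a (s.mem_insert_self a) (h.trans Set.sdiff_subset)

end IsPatchwork

section closure

variable {Ω : Type*}

lemma isPatchwork_patchworkClosure (C : Set (Set Ω)) : IsPatchwork (patchworkClosure C) :=
  ⟨fun _ hP => hP.1.1, fun _ hP => hP.1.2.1, fun A hA B hB hAB =>
    ⟨fun P hP => (hP.1.2.2 A (hA P hP) B (hB P hP) hAB).1,
      fun P hP => (hP.1.2.2 A (hA P hP) B (hB P hP) hAB).2.1,
      fun P hP => (hP.1.2.2 A (hA P hP) B (hB P hP) hAB).2.2⟩⟩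

lemma subset_patchworkClosure (C : Set (Set Ω)) : C ⊆ patchworkClosure C :=
  fun _ hA _ hP => hP.2 hA

lemma patchworkClosure_subset {C P : Set (Set Ω)} (hP : IsPatchwork P) (hCP : C ⊆ P) :
    patchworkClosure C ⊆ P :=
  Set.sInter_subset_of_mem ⟨hP, hCP⟩

lemma isPatchwork_insert_univ_setOf_notMem (a : Ω) :
    IsPatchwork (insert Set.univ {B : Set Ω | a ∉ B}) := by
  refine ⟨Or.inr (Set.notMem_empty a), Or.inl rfl, ?_⟩
  rintro A (rfl | hA) B (rfl | hB) ⟨-, hAB, hBA⟩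
  · exact absurd subset_rfl hAB
  · exact absurd (Set.subset_univ B) hBA
  · exact absurd (Set.subset_univ A) hAB
  · exact ⟨Or.inr fun h => hA h.1, Or.inr fun h => h.elim hA hB, Or.inr fun h => hA h.1⟩

lemma encard_insert_univ_setOf_notMem [Finite Ω] (a : Ω) :
    (insert Set.univ {B : Set Ω | a ∉ B}).encard = ((2 ^ (Nat.card Ω - 1) + 1 : ℕ) : ℕ∞) := by
  have hpow : {B : Set Ω | a ∉ B} = 𝒫 {a}ᶜ := by
    ext B
    simp [Set.subset_compl_singleton_iff]
  have huniv : Set.univ ∉ {B : Set Ω | a ∉ B} := fun h => h (Set.mem_univ a)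
  rw [Set.encard_insert_of_notMem huniv, hpow, ← Set.toFinite (𝒫 {a}ᶜ) |>.cast_ncard_eq,
    Set.ncard_powerset, Set.ncard_compl,
    Set.ncard_singleton]
  norm_cast

end closure

section hypercube

variable {α : Type*}

def containing (i : α) : Set (Finset α) := {x | i ∈ x}

lemma containing_injective : Function.Injective (containing (α := α)) := by
  classical
  intro i j h
  have hi : {i} ∈ containing j := h ▸ Finset.mem_singleton_self i
  exact (Finset.mem_singleton.mp hi).symm

lemma Ici_eq_biInter_containing (z : Finset α) : Set.Ici z = ⋂ i ∈ z, containing i := by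
  ext x
  simp [containing, Finset.subset_iff]

lemma pair_univ_eq_Ici_diff [Fintype α] [DecidableEq α] (z : Finset α) :
    ({z, Finset.univ} : Set (Finset α)) =
      Set.Ici z \ ⋃ p ∈ zᶜ.offDiag, (containing p.1 \ containing p.2) := by
  ext x
  simp only [Set.mem_insert_iff, Set.mem_singleton_iff, Set.mem_sdiff, Set.mem_Ici,
    Set.mem_iUnion, containing, Set.mem_ofPred_eq, Finset.mem_offDiag, Finset.mem_compl,
    exists_prop, not_exists, not_and, not_not, Prod.exists]
  constructor
  · rintro (rfl | rfl)
    · exact ⟨le_rfl, fun i _ hi hiz => absurd hiz hi.1⟩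
    · exact ⟨Finset.subset_univ z, fun _ j _ _ => Finset.mem_univ j⟩
  · rintro ⟨hzx, hx⟩
    by_cases h : ∃ i ∉ z, i ∈ x
    · obtain ⟨i, hiz, hix⟩ := h
      refine Or.inr (Finset.eq_univ_of_forall fun j => ?_)
      by_cases hjz : j ∈ z
      · exact hzx hjz
      by_cases hij : i = j
      · exact hij ▸ hix
      exact hx i j ⟨hiz, hjz, hij⟩ hix
    · refine Or.inl (le_antisymm (fun j hjx => ?_) hzx)
      by_contra hjz
      exact h ⟨j, hjz, hjx⟩

variable {P : Set (Set (Finset α))}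

lemma singleton_notMem_Ici [DecidableEq α] {z : Finset α} {j : α} (hz : z.Nonempty)
    (hj : j ∉ z) : {j} ∉ Set.Ici z := by
  intro hzj
  obtain ⟨k, hk⟩ := hz
  exact hj (Finset.mem_singleton.mp (hzj hk) ▸ hk)

lemma Ici_mem (hP : IsPatchwork P) (hC : ∀ i, containing i ∈ P) (z : Finset α) :
    Set.Ici z ∈ P := by
  rw [Ici_eq_biInter_containing]
  exact hP.biInter_mem fun i _ => hC i

variable [Fintype α]

lemma pair_univ_mem (hP : IsPatchwork P) (hC : ∀ i, containing i ∈ P) {z : Finset α}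
    (hz : z.Nonempty) : {z, Finset.univ} ∈ P := by
  classical
  rw [pair_univ_eq_Ici_diff]
  refine hP.diff_biUnion_mem (Ici_mem hP hC z) (fun p hp => ?_) fun p hp hsub => ?_
  all_goals obtain ⟨hp₁, -, hp₁₂⟩ := Finset.mem_offDiag.mp hp
  · refine hP.diff_mem_s16 (hC _) (hC _) fun hsub => hp₁₂ ?_
    have : {p.2} ∈ containing p.1 := hsub (Finset.mem_singleton_self p.2)
    exact Finset.mem_singleton.mp this
  · refine singleton_notMem_Ici hz (Finset.mem_compl.mp hp₁) (hsub ⟨?_, ?_⟩)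
    · exact Finset.mem_singleton_self p.1
    · exact fun h => hp₁₂ (Finset.mem_singleton.mp h).symm

lemma exists_finset_ne_of_three_le_card (hα : 3 ≤ Fintype.card α) (x y : Finset α) :
    ∃ w : Finset α, w ≠ ∅ ∧ w ≠ x ∧ w ≠ y ∧ w ≠ Finset.univ := by
  classical
  obtain ⟨w, -, hw⟩ := Finset.exists_mem_notMem_of_card_lt_card
    (s := {∅, x, y, Finset.univ}) (t := Finset.univ) <| by
      refine Finset.card_le_four.trans_lt ?_
      rw [Finset.card_univ, Fintype.card_finset]
      calc 4 < 2 ^ 3 := by norm_num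
        _ ≤ 2 ^ Fintype.card α := Nat.pow_le_pow_right two_pos hα
  simp only [Finset.mem_insert, Finset.mem_singleton, not_or] at hw
  exact ⟨w, hw⟩

lemma pair_mem (hP : IsPatchwork P) (hC : ∀ i, containing i ∈ P) (hα : Fintype.card α ≠ 2)
    {x y : Finset α} (hx : x.Nonempty) (hy : y.Nonempty) : {x, y} ∈ P := by
  classical
  by_cases hxu : x = Finset.univ
  · rw [hxu, Set.pair_comm]
    exact pair_univ_mem hP hC hy
  by_cases hyu : y = Finset.univ
  · rw [hyu]
    exact pair_univ_mem hP hC hx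
  have hα3 : 3 ≤ Fintype.card α := by
    have := Finset.card_lt_card (Finset.ssubset_univ_iff.mpr hxu)
    have := hx.card_pos
    rw [Finset.card_univ] at *
    omega
  obtain ⟨w, hw0, hwx, hwy, hwu⟩ := exists_finset_ne_of_three_le_card hα3 x y
  have hxy : ({x, y} : Set (Finset α)) =
      ({x, Finset.univ} ∪ {y, Finset.univ}) \ {w, Finset.univ} := by
    ext v
    simp only [Set.mem_insert_iff, Set.mem_singleton_iff, Set.mem_union, Set.mem_sdiff]
    grind
  rw [hxy]
  have hxyu := hP.union_mem_s16 (pair_univ_mem hP hC hx) (pair_univ_mem hP hC hy)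
    ⟨Finset.univ, by simp, by simp⟩
  refine hP.diff_mem_s16 hxyu (pair_univ_mem hP hC (Finset.nonempty_iff_ne_empty.mpr hw0))
    fun hsub => ?_
  have hw := hsub (Set.mem_insert w _)
  simp only [Set.mem_union, Set.mem_insert_iff, Set.mem_singleton_iff] at hw
  tauto

lemma mem_of_empty_notMem (hP : IsPatchwork P) (hC : ∀ i, containing i ∈ P)
    (hα : Fintype.card α ≠ 2) {B : Set (Finset α)} (hB : ∅ ∉ B) : B ∈ P := by
  obtain rfl | ⟨h, hh⟩ := B.eq_empty_or_nonempty
  · exact hP.1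
  have hne : ∀ z ∈ B, z.Nonempty := fun z hz =>
    Finset.nonempty_iff_ne_empty.mpr fun h0 => hB (h0 ▸ hz)
  have hunion : B = ⋃ z ∈ B.toFinite.toFinset, {z, h} := by
    ext v
    simp only [Set.mem_iUnion, Set.Finite.mem_toFinset, Set.mem_insert_iff,
      Set.mem_singleton_iff, exists_prop]
    exact ⟨fun hv => ⟨v, hv, Or.inl rfl⟩, by rintro ⟨z, hz, rfl | rfl⟩ <;> assumption⟩
  rw [hunion]
  exact hP.biUnion_mem (p := h)
    (fun z hz => pair_mem hP hC hα (hne z ((Set.Finite.mem_toFinset _).mp hz)) (hne h hh))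
    fun z _ => Set.mem_insert_of_mem z rfl

lemma patchworkClosure_range_containing (hα : Fintype.card α ≠ 2) :
    patchworkClosure (Set.range (containing (α := α))) =
      insert Set.univ {B : Set (Finset α) | ∅ ∉ B} := by
  refine (patchworkClosure_subset (isPatchwork_insert_univ_setOf_notMem ∅) ?_).antisymm ?_
  · rintro _ ⟨i, rfl⟩
    exact Or.inr (Finset.notMem_empty i)
  · have hP := isPatchwork_patchworkClosure (Set.range (containing (α := α)))
    have hC (i : α) : containing i ∈ patchworkClosure (Set.range containing) :=
      subset_patchworkClosure _ ⟨i, rfl⟩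
    rintro B (rfl | hB)
    · exact hP.2.1
    · exact mem_of_empty_notMem hP hC hα hB

end hypercube

theorem statement16 (n : ℕ) (hn : n ≠ 2) :
    ∃ (Ω : Type) (C : Set (Set Ω)), C.encard = (n : ℕ∞) ∧
      (patchworkClosure C).encard = ((2 ^ (2 ^ n - 1) + 1 : ℕ) : ℕ∞) := by
  refine ⟨Finset (Fin n), Set.range containing, ?_, ?_⟩
  · rw [← Set.image_univ, containing_injective.encard_image, Set.encard_univ]
    simp
  · rw [patchworkClosure_range_containing (by simpa using hn),
      encard_insert_univ_setOf_notMem]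
    simp
end

section
/- Let Ω be a finite set, C a set of subsets of Ω, and C⁺ the set consisting of all nonempty members of C together with all singletons {a} for a ∈ Ω. Then the following are equivalent: (i) there exists a linear order on Ω under which every member of C is convex; (ii) the intersection graph of C⁺ is isomorphic (as a simple graph) to the intersection graph of some finite set of closed intervals [s, t] = {x ∈ ℝ : s ≤ x ≤ t} with s < t of the real line. -/
/-- The intersection graph of a family `F` of sets: vertices are the members of `F`, with an
edge between two distinct members exactly when they have nonempty intersection. -/
def interGraph {α : Type*} (F : Set (Set α)) : SimpleGraph F where
  Adj A B := A ≠ B ∧ ((A : Set α) ∩ (B : Set α)).Nonempty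
  symm := ⟨by
    rintro A B ⟨hne, h⟩
    exact ⟨hne.symm, by rwa [Set.inter_comm]⟩⟩
  loopless := ⟨fun A h => h.1 rfl⟩

/-- `C⁺`: the nonempty members of `C` together with all singletons of points of `Ω`. -/
def CPlus {Ω : Type*} (C : Set (Set Ω)) : Set (Set Ω) :=
  {A ∈ C | A.Nonempty} ∪ Set.range (fun a : Ω => ({a} : Set Ω))

/-!
A linear order making every member of `C` convex makes every member of `C⁺` an order interval
`[a, b]`; sending it to `[2 rank a, 2 rank b + 1] ⊆ ℝ` preserves (non)intersection, and since
`C⁺` contains the singletons this map is injective. Conversely, the singletons go to pairwise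
disjoint real intervals, and ordering the points by these intervals works: the image `K` of a
member `A` is a real interval, and `A` is exactly the set of points whose interval meets `K`,
which is convex because the point intervals are laid out disjointly from left to right.
-/

open Set Function

section IntersectionGraph

variable {α β : Type*} {F : Set (Set α)} {H : Set (Set β)}

lemma interGraph_adj_iff {u v : F} :
    (interGraph F).Adj u v ↔ u ≠ v ∧ ((u : Set α) ∩ v).Nonempty :=
  Iff.rfl

lemma SimpleGraph.Iso.inter_nonempty_iff (hF : ∀ A ∈ F, A.Nonempty) (hH : ∀ B ∈ H, B.Nonempty)
    (G : interGraph F ≃g interGraph H) (u v : F) :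
    ((G u : Set β) ∩ G v).Nonempty ↔ ((u : Set α) ∩ v).Nonempty := by
  by_cases huv : u = v
  · subst huv
    simp only [inter_self]
    exact iff_of_true (hH _ (G u).2) (hF _ u.2)
  · have := G.map_adj_iff (v := u) (w := v)
    simp only [interGraph_adj_iff, ne_eq, G.injective.eq_iff] at this
    simpa [huv] using this

lemma injective_of_inter_nonempty_iff {g : F → Set β} (hsingleton : ∀ a : α, {a} ∈ F)
    (hg : ∀ u v, (g u ∩ g v).Nonempty ↔ ((u : Set α) ∩ v).Nonempty) : Injective g := by
  intro u v huv
  ext a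
  have hu := hg ⟨{a}, hsingleton a⟩ u
  rw [huv, hg] at hu
  simpa only [singleton_inter_nonempty] using hu.symm

noncomputable def interGraphIsoRange (g : F → Set β) (hinj : Injective g)
    (hg : ∀ u v, (g u ∩ g v).Nonempty ↔ ((u : Set α) ∩ v).Nonempty) :
    interGraph F ≃g interGraph (range g) where
  toEquiv := Equiv.ofInjective g hinj
  map_rel_iff' {u v} := by
    simp only [interGraph_adj_iff, ne_eq, (Equiv.ofInjective g hinj).injective.eq_iff]
    exact and_congr_right' (hg u v)

end IntersectionGraph

lemma cPlus_nonempty {Ω : Type*} {C : Set (Set Ω)} : ∀ A ∈ CPlus C, A.Nonempty := by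
  rintro A (⟨-, hA⟩ | ⟨a, rfl⟩)
  exacts [hA, singleton_nonempty a]

lemma singleton_mem_cPlus {Ω : Type*} (C : Set (Set Ω)) (a : Ω) : {a} ∈ CPlus C :=
  Or.inr ⟨a, rfl⟩

lemma two_mul_le_two_mul_add_one_iff {m n : ℕ} : (2 * m : ℝ) ≤ 2 * n + 1 ↔ m ≤ n := by
  have key : (2 * m : ℝ) ≤ 2 * n + 1 ↔ 2 * m ≤ 2 * n + 1 := by exact_mod_cast Iff.rfl
  rw [key]
  omega

section LinearOrder

variable {Ω : Type*} [LinearOrder Ω]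

lemma isConvex_singleton (a : Ω) : IsConvex (· ≤ ·) ({a} : Set Ω) := by
  rintro p q r hpq hqr rfl rfl
  exact le_antisymm hqr hpq

lemma IsConvex.eq_Icc {A : Set Ω} (hA : IsConvex (· ≤ ·) A) (hfin : A.Finite)
    (hne : A.Nonempty) : ∃ a b, A = Icc a b := by
  obtain ⟨a, ha, hmin⟩ := exists_min_image A id hfin hne
  obtain ⟨b, hb, hmax⟩ := exists_max_image A id hfin hne
  exact ⟨a, b, Subset.antisymm (fun x hx => ⟨hmin x hx, hmax x hx⟩)
    fun x hx => hA a x b hx.1 hx.2 ha hb⟩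

lemma Finite.nonempty_orderEmbedding_nat [Finite Ω] : Nonempty (Ω ↪o ℕ) := by
  have := Fintype.ofFinite Ω
  exact ⟨(Fintype.orderIsoFinOfCardEq Ω rfl).symm.toOrderEmbedding.trans (Fin.valOrderEmb _)⟩

lemma Icc_two_mul_inter_nonempty_iff (r : Ω ↪o ℕ) (a b c d : Ω) :
    (Icc (2 * r a : ℝ) (2 * r b + 1) ∩ Icc (2 * r c : ℝ) (2 * r d + 1)).Nonempty ↔
      (Icc a b ∩ Icc c d).Nonempty := by
  simp only [Icc_inter_Icc, nonempty_Icc, sup_le_iff, le_inf_iff,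
    two_mul_le_two_mul_add_one_iff, r.le_iff_le]

end LinearOrder

theorem exists_interval_model_of_isConvex {Ω : Type*} [LinearOrder Ω] [Finite Ω]
    (C : Set (Set Ω)) (hC : ∀ A ∈ C, IsConvex (· ≤ ·) A) :
    ∃ I : Set (Set ℝ), I.Finite ∧ (∀ J ∈ I, ∃ s t : ℝ, s < t ∧ J = Icc s t) ∧
      Nonempty (interGraph (CPlus C) ≃g interGraph I) := by
  have hIcc : ∀ A : CPlus C, ∃ a b, (A : Set Ω) = Icc a b := by
    rintro ⟨A, hA⟩
    refine IsConvex.eq_Icc ?_ A.toFinite (cPlus_nonempty A hA)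
    rcases hA with ⟨hA, -⟩ | ⟨a, rfl⟩
    exacts [hC A hA, isConvex_singleton a]
  choose lo hi hA using hIcc
  obtain ⟨r⟩ := Finite.nonempty_orderEmbedding_nat (Ω := Ω)
  -- Doubling the ranks leaves room to fatten singletons into intervals of positive length.
  let g : CPlus C → Set ℝ := fun A => Icc (2 * r (lo A)) (2 * r (hi A) + 1)
  have hg : ∀ A B, (g A ∩ g B).Nonempty ↔ ((A : Set Ω) ∩ B).Nonempty := fun A B => by
    rw [hA A, hA B]
    exact Icc_two_mul_inter_nonempty_iff r _ _ _ _
  refine ⟨range g, finite_range g, ?_,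
    ⟨interGraphIsoRange g (injective_of_inter_nonempty_iff (singleton_mem_cPlus C) hg) hg⟩⟩
  rintro _ ⟨A, rfl⟩
  have hle : (r (lo A) : ℝ) ≤ r (hi A) := by
    exact_mod_cast r.le_iff_le.2 (nonempty_Icc.1 (hA A ▸ cPlus_nonempty _ A.2))
  exact ⟨_, _, by linarith, rfl⟩

section Disjoint

variable {α ι : Type*} [LinearOrder α] {s t : ι → α}

lemma lt_of_disjoint_Icc {a b c d : α} (h : Disjoint (Icc a b) (Icc c d)) (hcd : c ≤ d)
    (hac : a ≤ c) : b < c := by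
  by_contra! hbc
  exact h.ne_of_mem ⟨hac, hbc⟩ (left_mem_Icc.2 hcd) rfl

lemma injective_of_pairwise_disjoint_Icc (hst : ∀ i, s i ≤ t i)
    (hdisj : Pairwise (Disjoint on fun i => Icc (s i) (t i))) : Injective s := by
  intro i j hij
  by_contra hne
  exact hdisj hne |>.ne_of_mem (left_mem_Icc.2 (hst i)) (left_mem_Icc.2 (hst j)) hij

lemma isConvex_setOf_inter_Icc_nonempty (hst : ∀ i, s i ≤ t i)
    (hdisj : Pairwise (Disjoint on fun i => Icc (s i) (t i))) {K : Set α} (hK : K.OrdConnected) :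
    IsConvex (fun i j => s i ≤ s j) {i | (K ∩ Icc (s i) (t i)).Nonempty} := by
  rintro p q r hpq hqr ⟨x, hxK, hxp⟩ ⟨y, hyK, hyr⟩
  rcases eq_or_ne q p with rfl | hqp
  · exact ⟨x, hxK, hxp⟩
  rcases eq_or_ne q r with rfl | hqr'
  · exact ⟨y, hyK, hyr⟩
  have htp : t p < s q := lt_of_disjoint_Icc (hdisj hqp.symm) (hst q) hpq
  have htq : t q < s r := lt_of_disjoint_Icc (hdisj hqr') (hst r) hqr
  exact ⟨s q, hK.out hxK hyK ⟨hxp.2.trans htp.le, (hst q).trans (htq.le.trans hyr.1)⟩,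
    left_mem_Icc.2 (hst q)⟩

end Disjoint

theorem exists_linearOrder_isConvex_of_iso {Ω : Type*} {C : Set (Set Ω)} {I : Set (Set ℝ)}
    (hI : ∀ J ∈ I, ∃ s t : ℝ, s < t ∧ J = Icc s t) (G : interGraph (CPlus C) ≃g interGraph I) :
    ∃ L : LinearOrder Ω, ∀ A ∈ C, IsConvex L.le A := by
  choose! s t hst hJ using hI
  have hI_ne : ∀ J ∈ I, J.Nonempty := fun J hJI => hJ J hJI ▸ nonempty_Icc.2 (hst J hJI).le
  have hG := G.inter_nonempty_iff cPlus_nonempty hI_ne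
  let pt : Ω → CPlus C := fun a => ⟨{a}, singleton_mem_cPlus C a⟩
  let σ a := s (G (pt a))
  let τ a := t (G (pt a))
  have hστ : ∀ a, σ a ≤ τ a := fun a => (hst _ (G (pt a)).2).le
  have hpt : ∀ a, (G (pt a) : Set ℝ) = Icc (σ a) (τ a) := fun a => hJ _ (G (pt a)).2
  have hdisj : Pairwise (Disjoint on fun a => Icc (σ a) (τ a)) := by
    intro a b hab
    rw [Function.onFun, ← hpt, ← hpt, disjoint_iff_inter_eq_empty, ← not_nonempty_iff_eq_empty, hG]
    simpa [pt] using hab.symm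
  refine ⟨LinearOrder.lift' σ (injective_of_pairwise_disjoint_Icc hστ hdisj), fun A hA => ?_⟩
  rcases A.eq_empty_or_nonempty with rfl | hne
  · exact fun p q r _ _ hp => hp.elim
  let v : CPlus C := ⟨A, Or.inl ⟨hA, hne⟩⟩
  have hAeq : A = {a | ((G v : Set ℝ) ∩ Icc (σ a) (τ a)).Nonempty} := by
    ext a
    rw [mem_ofPred_eq, ← hpt, hG v (pt a)]
    simp [v, pt]
  rw [hAeq]
  exact isConvex_setOf_inter_Icc_nonempty hστ hdisj (hJ _ (G v).2 ▸ ordConnected_Icc)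

theorem statement19 {Ω : Type*} [Finite Ω] (C : Set (Set Ω)) :
    (∃ L : LinearOrder Ω, ∀ A ∈ C, IsConvex L.le A) ↔
      ∃ I : Set (Set ℝ), I.Finite ∧
        (∀ J ∈ I, ∃ s t : ℝ, s < t ∧ J = Set.Icc s t) ∧
        Nonempty (interGraph (CPlus C) ≃g interGraph I) := by
  constructor
  · rintro ⟨L, hL⟩
    let _ := L
    exact exists_interval_model_of_isConvex C hL
  · rintro ⟨I, -, hI, ⟨G⟩⟩
    exact exists_linearOrder_isConvex_of_iso hI G
end
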